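/- arXiv:1602.01572 — 4 statements merged into one kernel-verified Lean document; each statement's English description precedes it below -/
import Mathlib

section
/- Let w : {1, …, n} → ℕ be a weight function and let φ₁, …, φ_k ∈ ℂ[x₁, …, xₙ] be nonzero polynomials. For nonzero f ∈ ℂ[x₁, …, xₙ] let min_w(f) denote the sum of the terms of f whose weighted degree Σᵢ w(i)αᵢ is minimal. Define ℂ-algebra homomorphisms α, β : ℂ[X₁, …, X_k] → ℂ[x₁, …, xₙ] by α(X_j) = φ_j and β(X_j) = min_w(φ_j). Grade ℂ[X₁, …, X_k] by assigning X_j the degree ν_w(φ_j), and for nonzero h ∈ ℂ[X₁, …, X_k] let Min(h) denote the sum of the monomials of h of minimal degree for this grading. Then for every nonzero h ∈ ker α, one has Min(h) ∈ ker β. (This gives the inclusion min_i(I) ⊆ min_i(J) of the ideal of minimal parts of relations among the φ_j into the ideal of relations among their minimal parts.) -/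
/-- The weighted degree `∑ᵢ w i * α i` of an exponent vector `α`. -/
def wdeg {n : ℕ} (w : Fin n → ℕ) (α : Fin n →₀ ℕ) : ℕ := ∑ i, w i * α i

/-- The weighted order `ν_w f`: the minimum of the weighted degrees of the monomials
occurring in `f` (junk value `0` for `f = 0`). -/
noncomputable def nu {n : ℕ} (w : Fin n → ℕ) (f : MvPolynomial (Fin n) ℂ) : ℕ :=
  (f.support.image (wdeg w)).min.untopD 0

/-- `minPart w f` is the sum of the terms of `f` whose weighted degree is minimal. -/
noncomputable def minPart {n : ℕ} (w : Fin n → ℕ) (f : MvPolynomial (Fin n) ℂ) :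
    MvPolynomial (Fin n) ℂ :=
  ∑ α ∈ f.support.filter (fun α => wdeg w α = nu w f),
    MvPolynomial.monomial α (MvPolynomial.coeff α f)

open MvPolynomial Finsupp

lemma weight_eq_wdeg {n : ℕ} (w : Fin n → ℕ) (α : Fin n →₀ ℕ) :
    Finsupp.weight w α = wdeg w α := by
  rw [Finsupp.weight_apply, wdeg, Finsupp.sum_fintype]
  · exact Finset.sum_congr rfl fun i _ => by simp [mul_comm]
  · simp

lemma wdeg_add {n : ℕ} (w : Fin n → ℕ) (α β : Fin n →₀ ℕ) :
    wdeg w (α + β) = wdeg w α + wdeg w β := by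
  simp [← weight_eq_wdeg]

lemma nu_le {n : ℕ} (w : Fin n → ℕ) {f : MvPolynomial (Fin n) ℂ} {α : Fin n →₀ ℕ}
    (hα : α ∈ f.support) : nu w f ≤ wdeg w α := by
  have h1 : (f.support.image (wdeg w)).min ≤ (wdeg w α : WithTop ℕ) :=
    Finset.min_le (Finset.mem_image_of_mem _ hα)
  unfold nu
  rcases hmin : (f.support.image (wdeg w)).min with _ | b
  · exact Nat.zero_le _
  · rw [hmin] at h1
    have : b ≤ wdeg w α := WithTop.coe_le_coe.mp h1
    exact this

/-- All monomials of `f` have weighted degree at least `d`. -/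
def GeW {n : ℕ} (w : Fin n → ℕ) (d : ℕ) (f : MvPolynomial (Fin n) ℂ) : Prop :=
  ∀ α, MvPolynomial.coeff α f ≠ 0 → d ≤ wdeg w α

lemma minPart_eq_wc {n : ℕ} (w : Fin n → ℕ) (f : MvPolynomial (Fin n) ℂ) :
    minPart w f = weightedHomogeneousComponent w (nu w f) f := by
  classical
  rw [weightedHomogeneousComponent_apply, minPart]
  apply Finset.sum_congr
  · apply Finset.filter_congr
    intro α _
    simp [weight_eq_wdeg]
  · intros; rfl

lemma geW_of_homog {n : ℕ} {w : Fin n → ℕ} {d : ℕ} {f : MvPolynomial (Fin n) ℂ}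
    (hf : f.IsWeightedHomogeneous w d) : GeW w d f := fun α hα => by
  rw [← weight_eq_wdeg, hf hα]

lemma geW_wc {n : ℕ} (w : Fin n → ℕ) (d : ℕ) (f : MvPolynomial (Fin n) ℂ) :
    GeW w d (weightedHomogeneousComponent w d f) :=
  geW_of_homog (weightedHomogeneousComponent_isWeightedHomogeneous d f)

lemma geW_add {n : ℕ} {w : Fin n → ℕ} {d : ℕ} {f g : MvPolynomial (Fin n) ℂ}
    (hf : GeW w d f) (hg : GeW w d g) : GeW w d (f + g) := by
  intro α hα
  rw [MvPolynomial.coeff_add] at hα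
  rcases (by by_contra hc; push_neg at hc; simp [hc.1, hc.2] at hα :
      MvPolynomial.coeff α f ≠ 0 ∨ MvPolynomial.coeff α g ≠ 0) with h | h
  · exact hf α h
  · exact hg α h

lemma geW_mono {n : ℕ} {w : Fin n → ℕ} {d e : ℕ} {f : MvPolynomial (Fin n) ℂ}
    (hde : e ≤ d) (hf : GeW w d f) : GeW w e f := fun α hα => le_trans hde (hf α hα)

lemma geW_mul {n : ℕ} {w : Fin n → ℕ} {d e : ℕ} {f g : MvPolynomial (Fin n) ℂ}
    (hf : GeW w d f) (hg : GeW w e g) : GeW w (d + e) (f * g) := by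
  classical
  intro α hα
  have hα' : α ∈ (f * g).support := by simpa using hα
  have := MvPolynomial.support_mul f g hα'
  rw [Finset.mem_add] at this
  obtain ⟨β, hβ, γ, hγ, rfl⟩ := this
  rw [wdeg_add]
  exact add_le_add (hf β (by simpa using hβ)) (hg γ (by simpa using hγ))

lemma wc_eq_zero_of_geW {n : ℕ} {w : Fin n → ℕ} {d e : ℕ} {f : MvPolynomial (Fin n) ℂ}
    (hf : GeW w d f) (hed : e < d) : weightedHomogeneousComponent w e f = 0 := by
  classical
  ext α
  rw [coeff_weightedHomogeneousComponent, MvPolynomial.coeff_zero]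
  split_ifs with hw
  · by_contra hc
    have := hf α hc
    rw [← weight_eq_wdeg] at this
    omega
  · rfl

lemma geW_sub_wc {n : ℕ} {w : Fin n → ℕ} {d : ℕ} {f : MvPolynomial (Fin n) ℂ}
    (hf : GeW w d f) : GeW w (d + 1) (f - weightedHomogeneousComponent w d f) := by
  classical
  intro α hα
  rw [MvPolynomial.coeff_sub, coeff_weightedHomogeneousComponent] at hα
  split_ifs at hα with hw
  · simp at hα
  · rw [weight_eq_wdeg] at hw
    have := hf α (by simpa using hα)
    omega

lemma low_mul {n : ℕ} {w : Fin n → ℕ} {d e : ℕ} {f g : MvPolynomial (Fin n) ℂ}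
    (hf : GeW w d f) (hg : GeW w e g) :
    weightedHomogeneousComponent w (d + e) (f * g) =
      weightedHomogeneousComponent w d f * weightedHomogeneousComponent w e g := by
  classical
  set m := weightedHomogeneousComponent w d f with hm
  set m' := weightedHomogeneousComponent w e g with hm'
  have hfd : f = m + (f - m) := by ring
  have hge : g = m' + (g - m') := by ring
  have key : f * g = m * m' + (m * (g - m') + (f - m) * m' + (f - m) * (g - m')) := by ring
  rw [key, map_add]
  have hmm' : (m * m').IsWeightedHomogeneous w (d + e) :=
    (weightedHomogeneousComponent_isWeightedHomogeneous d f).mul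
      (weightedHomogeneousComponent_isWeightedHomogeneous e g)
  rw [hmm'.weightedHomogeneousComponent_same]
  have h1 : GeW w (d + e + 1) (m * (g - m')) := by
    have := geW_mul (geW_wc w d f) (geW_sub_wc hg)
    simpa [add_assoc] using this
  have h2 : GeW w (d + e + 1) ((f - m) * m') := by
    have := geW_mul (geW_sub_wc hf) (geW_wc w e g)
    have h' : d + 1 + e = d + e + 1 := by ring
    rwa [h'] at this
  have h3 : GeW w (d + e + 1) ((f - m) * (g - m')) := by
    have := geW_mul (geW_sub_wc hf) (geW_sub_wc hg)
    exact geW_mono (by omega) this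
  rw [wc_eq_zero_of_geW (geW_add (geW_add h1 h2) h3) (by omega), add_zero]

lemma low_pow {n : ℕ} {w : Fin n → ℕ} {d : ℕ} {f : MvPolynomial (Fin n) ℂ}
    (hf : GeW w d f) (a : ℕ) :
    GeW w (a * d) (f ^ a) ∧
      weightedHomogeneousComponent w (a * d) (f ^ a) =
        (weightedHomogeneousComponent w d f) ^ a := by
  induction a with
  | zero =>
    constructor
    · intro α hα; simpa using Nat.zero_le _
    · simp [isWeightedHomogeneous_one ℂ w |>.weightedHomogeneousComponent_same]
  | succ a ih =>
    have hge : GeW w (a * d + d) (f ^ a * f) := geW_mul ih.1 hf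
    have hmul := low_mul ih.1 hf
    constructor
    · intro α hα
      have : f ^ (a + 1) = f ^ a * f := pow_succ f a
      rw [this] at hα
      have := hge α hα
      have he : (a + 1) * d = a * d + d := by ring
      omega
    · rw [pow_succ, show (a + 1) * d = a * d + d by ring, hmul, ih.2, pow_succ]

lemma low_prod {n k : ℕ} {w : Fin n → ℕ} (s : Finset (Fin k)) (d : Fin k → ℕ)
    (f : Fin k → MvPolynomial (Fin n) ℂ) (hf : ∀ j, GeW w (d j) (f j)) :
    GeW w (∑ j ∈ s, d j) (∏ j ∈ s, f j) ∧
      weightedHomogeneousComponent w (∑ j ∈ s, d j) (∏ j ∈ s, f j) =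
        ∏ j ∈ s, weightedHomogeneousComponent w (d j) (f j) := by
  classical
  induction s using Finset.induction with
  | empty =>
    constructor
    · intro α hα; simpa using Nat.zero_le _
    · simp [isWeightedHomogeneous_one ℂ w |>.weightedHomogeneousComponent_same]
  | @insert x s hx ih =>
    rw [Finset.sum_insert hx, Finset.prod_insert hx, Finset.prod_insert hx]
    exact ⟨geW_mul (hf x) ih.1, by rw [low_mul (hf x) ih.1, ih.2]⟩


/-- If `h` is a nonzero relation among `φ₁, …, φ_k` (an element of `ker α` for
`α(X_j) = φ_j`), then the minimal part of `h` for the grading `deg X_j = ν_w (φ_j)`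
is a relation among the minimal parts `min_w (φ_j)`, i.e. lies in `ker β` for
`β(X_j) = min_w (φ_j)`. This gives the inclusion `min_i(I) ⊆ min_i(J)`. -/
theorem stmt_6 {n k : ℕ} (w : Fin n → ℕ) (φ : Fin k → MvPolynomial (Fin n) ℂ)
    (hφ : ∀ j, φ j ≠ 0) (h : MvPolynomial (Fin k) ℂ) (hh : h ≠ 0)
    (hker : MvPolynomial.aeval φ h = 0) :
    MvPolynomial.aeval (fun j => minPart w (φ j))
      (minPart (fun j => nu w (φ j)) h) = 0 := by
  classical
  set W : Fin k → ℕ := fun j => nu w (φ j) with hW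
  set m : Fin k → MvPolynomial (Fin n) ℂ := fun j => minPart w (φ j) with hm
  set d₀ := nu W h with hd₀
  have hbase : ∀ j, GeW w (W j) (φ j) := fun j α hα => nu_le w (by simpa using hα)
  have hbc : ∀ j, weightedHomogeneousComponent w (W j) (φ j) = m j := fun j =>
    (minPart_eq_wc w (φ j)).symm
  have expand : (MvPolynomial.aeval φ) h =
      ∑ a ∈ h.support, MvPolynomial.coeff a h • ∏ j, (φ j) ^ a j := by
    conv_lhs => rw [MvPolynomial.as_sum h]
    rw [map_sum]
    refine Finset.sum_congr rfl fun a _ => ?_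
    rw [MvPolynomial.aeval_monomial, Finsupp.prod_pow, Algebra.smul_def]
  have h0 : weightedHomogeneousComponent w d₀ ((MvPolynomial.aeval φ) h) = 0 := by
    rw [hker]; simp
  rw [expand, map_sum] at h0
  simp only [LinearMap.map_smul] at h0
  have hcomp : ∀ a ∈ h.support,
      weightedHomogeneousComponent w d₀ (∏ j, (φ j) ^ a j) =
        if wdeg W a = d₀ then ∏ j, (m j) ^ a j else 0 := by
    intro a ha
    have hpw := low_prod Finset.univ (fun j => a j * W j) (fun j => (φ j) ^ a j)
      (fun j => (low_pow (hbase j) (a j)).1)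
    have hsum : ∑ j, a j * W j = wdeg W a := by
      simp [wdeg, mul_comm]
    have hprod : (∏ j, weightedHomogeneousComponent w (a j * W j) ((φ j) ^ a j)) =
        ∏ j, (m j) ^ a j := by
      refine Finset.prod_congr rfl fun j _ => ?_
      rw [(low_pow (hbase j) (a j)).2, hbc j]
    split_ifs with hcase
    · rw [← hcase, ← hsum, hpw.2, hprod]
    · have hle : d₀ ≤ wdeg W a := nu_le W ha
      have hlt : d₀ < ∑ j, a j * W j := by omega
      exact wc_eq_zero_of_geW (hsum ▸ hpw.1) (hsum ▸ hlt)
  rw [Finset.sum_congr rfl (fun a ha => by rw [hcomp a ha])] at h0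
  have goal_eq : (MvPolynomial.aeval m) (minPart W h) =
      ∑ a ∈ h.support, MvPolynomial.coeff a h • (if wdeg W a = d₀ then ∏ j, (m j) ^ a j else 0) := by
    rw [minPart, map_sum, Finset.sum_filter]
    refine Finset.sum_congr rfl fun a _ => ?_
    split_ifs with hcase
    · rw [MvPolynomial.aeval_monomial, Finsupp.prod_pow, Algebra.smul_def]
    · simp
  rw [goal_eq, h0]
end

section
/- Let Q₈ ⊂ SL(2, ℂ) be the quaternion group of order 8 generated by diag(√−1, −√−1) and the matrix ((0, 1), (−1, 0)), acting on ℂ[x, y] by linear substitution of the variables. Then the invariant ring ℂ[x, y]^{Q₈} equals the ℂ-subalgebra generated by the three polynomials x⁴ + y⁴ + 2√−3·x²y², x⁴ + y⁴ − 2√−3·x²y², and x⁵y − xy⁵. -/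
open MvPolynomial

noncomputable def act (g : Matrix (Fin 2) (Fin 2) ℂ) : MvPolynomial (Fin 2) ℂ →ₐ[ℂ] MvPolynomial (Fin 2) ℂ :=
  aeval (fun i : Fin 2 => ∑ j : Fin 2, C (g i j) * X j)

lemma act_one (f : MvPolynomial (Fin 2) ℂ) : act 1 f = f := by
  have : act (1 : Matrix (Fin 2) (Fin 2) ℂ) = aeval X := by
    unfold act
    congr 1
    funext i
    simp [Matrix.one_apply, Finset.sum_ite_eq, apply_ite C]
  rw [this, aeval_X_left, AlgHom.id_apply]

lemma act_eq_bind (g : Matrix (Fin 2) (Fin 2) ℂ) :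
    act g = bind₁ (fun i : Fin 2 => ∑ j : Fin 2, C (g i j) * X j) := rfl

lemma act_mul (g h : Matrix (Fin 2) (Fin 2) ℂ) (f : MvPolynomial (Fin 2) ℂ) :
    act (g * h) f = act h (act g f) := by
  rw [act_eq_bind, act_eq_bind, act_eq_bind, bind₁_bind₁]
  have : (fun i : Fin 2 => ∑ j : Fin 2, C ((g * h) i j) * X j)
      = fun i : Fin 2 => (bind₁ fun i : Fin 2 => ∑ j : Fin 2, C (h i j) * X j)
          (∑ j : Fin 2, C (g i j) * X j) := by
    funext i
    simp [Matrix.mul_apply, Fin.sum_univ_two, map_add, map_mul]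
    ring
  rw [this]



lemma act_X (g : Matrix (Fin 2) (Fin 2) ℂ) (i : Fin 2) :
    act g (X i) = C (g i 0) * X 0 + C (g i 1) * X 1 := by
  simp [act, Fin.sum_univ_two]

lemma act_C (g : Matrix (Fin 2) (Fin 2) ℂ) (c : ℂ) : act g (C c) = C c := by
  simp [act, algebraMap_eq]

lemma actd_X0 : act !![Complex.I, 0; 0, -Complex.I] (X 0) = C Complex.I * X 0 := by
  rw [act_X]; norm_num

lemma actd_X1 : act !![Complex.I, 0; 0, -Complex.I] (X 1) = C (-Complex.I) * X 1 := by
  rw [act_X, show !![Complex.I, 0; 0, -Complex.I] 1 0 = 0 from rfl,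
      show !![Complex.I, 0; 0, -Complex.I] 1 1 = -Complex.I from rfl]
  simp

lemma acts_X0 : act !![0, 1; -1, 0] (X 0) = X 1 := by
  rw [act_X, show !![(0:ℂ), 1; -1, 0] 0 0 = 0 from rfl, show !![(0:ℂ), 1; -1, 0] 0 1 = 1 from rfl]
  simp

lemma acts_X1 : act !![0, 1; -1, 0] (X 1) = - X 0 := by
  rw [act_X, show !![(0:ℂ), 1; -1, 0] 1 0 = -1 from rfl, show !![(0:ℂ), 1; -1, 0] 1 1 = 0 from rfl]
  simp

noncomputable def swp (m : Fin 2 →₀ ℕ) : Fin 2 →₀ ℕ := Finsupp.single 0 (m 1) + Finsupp.single 1 (m 0)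

@[simp] lemma swp_apply0 (m : Fin 2 →₀ ℕ) : swp m 0 = m 1 := by
  simp [swp, Finsupp.single_apply]

@[simp] lemma swp_apply1 (m : Fin 2 →₀ ℕ) : swp m 1 = m 0 := by
  simp [swp, Finsupp.single_apply]

lemma fin2_finsupp_eq (m : Fin 2 →₀ ℕ) : m = Finsupp.single 0 (m 0) + Finsupp.single 1 (m 1) := by
  ext i
  fin_cases i <;> simp [Finsupp.single_apply]

@[simp] lemma swp_swp (m : Fin 2 →₀ ℕ) : swp (swp m) = m := by
  ext i
  fin_cases i <;> simp

lemma swp_inj {m m' : Fin 2 →₀ ℕ} (h : swp m = swp m') : m = m' := by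
  have := congrArg swp h
  simpa using this

lemma monomial_eq_prod (a b : ℕ) (c : ℂ) :
    (monomial (Finsupp.single 0 a + Finsupp.single 1 b) c : MvPolynomial (Fin 2) ℂ)
      = C c * X 0 ^ a * X 1 ^ b := by
  rw [monomial_single_add, show (Finsupp.single 1 b : Fin 2 →₀ ℕ) = Finsupp.single 1 b + 0 from (add_zero _).symm,
    monomial_single_add, monomial_zero']
  ring

lemma actd_monomial (m : Fin 2 →₀ ℕ) (c : ℂ) :
    act !![Complex.I, 0; 0, -Complex.I] (monomial m c)
      = monomial m (c * Complex.I ^ (m 0) * (-Complex.I) ^ (m 1)) := by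
  have h : ∀ (a b : ℕ) (c : ℂ), act !![Complex.I, 0; 0, -Complex.I]
      (monomial (Finsupp.single 0 a + Finsupp.single 1 b) c)
      = monomial (Finsupp.single 0 a + Finsupp.single 1 b) (c * Complex.I ^ a * (-Complex.I) ^ b) := by
    intro a b c
    rw [monomial_eq_prod, monomial_eq_prod]
    simp only [map_mul, map_pow, act_C, actd_X0, actd_X1, mul_pow]
    simp only [← C_pow]
    try simp only [map_mul]
    ring
  conv_lhs => rw [fin2_finsupp_eq m]
  rw [h, ← fin2_finsupp_eq m]

lemma acts_monomial (m : Fin 2 →₀ ℕ) (c : ℂ) :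
    act !![0, 1; -1, 0] (monomial m c)
      = monomial (swp m) ((-1) ^ (m 1) * c) := by
  have hsw : ∀ a b : ℕ, swp (Finsupp.single 0 a + Finsupp.single 1 b) = Finsupp.single 0 b + Finsupp.single 1 a := by
    intro a b
    ext i
    fin_cases i <;> simp [Finsupp.single_apply]
  have h : ∀ (a b : ℕ) (c : ℂ), act !![0, 1; -1, 0]
      (monomial (Finsupp.single 0 a + Finsupp.single 1 b) c)
      = monomial (Finsupp.single 0 b + Finsupp.single 1 a) ((-1) ^ b * c) := by
    intro a b c
    rw [monomial_eq_prod, monomial_eq_prod]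
    simp only [map_mul, map_pow, act_C, acts_X0, acts_X1]
    rw [show (-X 0 : MvPolynomial (Fin 2) ℂ) = C (-1) * X 0 by simp]
    simp only [mul_pow]
    simp only [← C_pow]
    try simp only [map_mul]
    ring
  conv_lhs => rw [fin2_finsupp_eq m]
  rw [h, ← hsw, ← fin2_finsupp_eq m]

lemma coeff_actd (f : MvPolynomial (Fin 2) ℂ) (m : Fin 2 →₀ ℕ) :
    coeff m (act !![Complex.I, 0; 0, -Complex.I] f)
      = Complex.I ^ (m 0) * (-Complex.I) ^ (m 1) * coeff m f := by
  induction f using MvPolynomial.induction_on' with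
  | monomial u a =>
    rw [actd_monomial, coeff_monomial, coeff_monomial]
    split
    · rename_i h; subst h; ring
    · ring
  | add p q hp hq => simp [hp, hq]; try ring

lemma coeff_acts (f : MvPolynomial (Fin 2) ℂ) (m : Fin 2 →₀ ℕ) :
    coeff m (act !![0, 1; -1, 0] f)
      = (-1) ^ (m 0) * coeff (swp m) f := by
  induction f using MvPolynomial.induction_on' with
  | monomial u a =>
    rw [acts_monomial, coeff_monomial, coeff_monomial]
    have : swp u = m ↔ u = swp m := by
      constructor
      · rintro rfl; rw [swp_swp]
      · rintro rfl; rw [swp_swp]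
    by_cases h : swp u = m
    · rw [if_pos h, if_pos (this.mp h)]
      have hu : u 1 = m 0 := by rw [← h, swp_apply0]
      rw [hu]
    · rw [if_neg h, if_neg (fun hh => h (by rw [hh, swp_swp]))]
      ring
  | add p q hp hq => simp [hp, hq]; try ring


noncomputable def Sgen : Set (MvPolynomial (Fin 2) ℂ) :=
  {X 0 ^ 4 + X 1 ^ 4 + C (2 * (Real.sqrt 3 : ℂ) * Complex.I) * X 0 ^ 2 * X 1 ^ 2,
   X 0 ^ 4 + X 1 ^ 4 - C (2 * (Real.sqrt 3 : ℂ) * Complex.I) * X 0 ^ 2 * X 1 ^ 2,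
   X 0 ^ 5 * X 1 - X 0 * X 1 ^ 5}

noncomputable def SA : Subalgebra ℂ (MvPolynomial (Fin 2) ℂ) := Algebra.adjoin ℂ Sgen

lemma hA : (X 0 ^ 4 + X 1 ^ 4 : MvPolynomial (Fin 2) ℂ) ∈ SA := by
  have h1 : (X 0 ^ 4 + X 1 ^ 4 + C (2 * (Real.sqrt 3 : ℂ) * Complex.I) * X 0 ^ 2 * X 1 ^ 2 : MvPolynomial (Fin 2) ℂ) ∈ SA :=
    Algebra.subset_adjoin (by left; rfl)
  have h2 : (X 0 ^ 4 + X 1 ^ 4 - C (2 * (Real.sqrt 3 : ℂ) * Complex.I) * X 0 ^ 2 * X 1 ^ 2 : MvPolynomial (Fin 2) ℂ) ∈ SA :=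
    Algebra.subset_adjoin (by right; left; rfl)
  have := SA.smul_mem (SA.add_mem h1 h2) ((2:ℂ)⁻¹)
  convert this using 1
  rw [Algebra.smul_def, algebraMap_eq]
  rw [show (C (2⁻¹ : ℂ) : MvPolynomial (Fin 2) ℂ) * _ = C (2⁻¹ : ℂ) * (2 * (X 0 ^ 4 + X 1 ^ 4)) from by ring]
  rw [show (2 : MvPolynomial (Fin 2) ℂ) = C 2 from (map_ofNat C 2).symm, ← mul_assoc, ← map_mul]
  norm_num

lemma hB : (X 0 ^ 2 * X 1 ^ 2 : MvPolynomial (Fin 2) ℂ) ∈ SA := by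
  have h1 : (X 0 ^ 4 + X 1 ^ 4 + C (2 * (Real.sqrt 3 : ℂ) * Complex.I) * X 0 ^ 2 * X 1 ^ 2 : MvPolynomial (Fin 2) ℂ) ∈ SA :=
    Algebra.subset_adjoin (by left; rfl)
  have h2 : (X 0 ^ 4 + X 1 ^ 4 - C (2 * (Real.sqrt 3 : ℂ) * Complex.I) * X 0 ^ 2 * X 1 ^ 2 : MvPolynomial (Fin 2) ℂ) ∈ SA :=
    Algebra.subset_adjoin (by right; left; rfl)
  have hne : (4 * (Real.sqrt 3 : ℂ) * Complex.I) ≠ 0 := by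
    refine mul_ne_zero (mul_ne_zero (by norm_num) ?_) Complex.I_ne_zero
    exact_mod_cast Complex.ofReal_ne_zero.mpr (by positivity)
  have := SA.smul_mem (SA.sub_mem h1 h2) ((4 * (Real.sqrt 3 : ℂ) * Complex.I)⁻¹)
  convert this using 1
  rw [Algebra.smul_def, algebraMap_eq]
  rw [show (X 0 ^ 4 + X 1 ^ 4 + C (2 * (Real.sqrt 3 : ℂ) * Complex.I) * X 0 ^ 2 * X 1 ^ 2)
      - (X 0 ^ 4 + X 1 ^ 4 - C (2 * (Real.sqrt 3 : ℂ) * Complex.I) * X 0 ^ 2 * X 1 ^ 2)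
      = (C (2 * (Real.sqrt 3 : ℂ) * Complex.I) * 2) * (X 0 ^ 2 * X 1 ^ 2 : MvPolynomial (Fin 2) ℂ) from by ring]
  rw [show (2 : MvPolynomial (Fin 2) ℂ) = C 2 from (map_ofNat C 2).symm, ← map_mul, ← mul_assoc, ← map_mul]
  rw [show (4 * (Real.sqrt 3 : ℂ) * Complex.I)⁻¹ * (2 * (Real.sqrt 3 : ℂ) * Complex.I * 2)
      = 1 from by field_simp; ring]
  simp

lemma hD : (X 0 ^ 5 * X 1 - X 0 * X 1 ^ 5 : MvPolynomial (Fin 2) ℂ) ∈ SA :=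
  Algebra.subset_adjoin (by right; right; rfl)

lemma s_mem (k : ℕ) : (X 0 ^ (4 * k) + X 1 ^ (4 * k) : MvPolynomial (Fin 2) ℂ) ∈ SA := by
  induction k using Nat.twoStepInduction with
  | zero => simpa using SA.add_mem SA.one_mem SA.one_mem
  | one => simpa using hA
  | more k ih1 ih2 =>
    have key : (X 0 ^ (4 * (k + 2)) + X 1 ^ (4 * (k + 2)) : MvPolynomial (Fin 2) ℂ)
        = (X 0 ^ 4 + X 1 ^ 4) * (X 0 ^ (4 * (k + 1)) + X 1 ^ (4 * (k + 1)))
          - (X 0 ^ 2 * X 1 ^ 2) ^ 2 * (X 0 ^ (4 * k) + X 1 ^ (4 * k)) := by ring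
    rw [key]
    exact SA.sub_mem (SA.mul_mem hA ih2) (SA.mul_mem (SA.pow_mem hB 2) ih1)

lemma d_mem (k : ℕ) : (X 0 * X 1 * (X 0 ^ (4 * k) - X 1 ^ (4 * k)) : MvPolynomial (Fin 2) ℂ) ∈ SA := by
  induction k using Nat.twoStepInduction with
  | zero => simpa using SA.zero_mem
  | one =>
    rw [show (X 0 * X 1 * (X 0 ^ (4 * 1) - X 1 ^ (4 * 1)) : MvPolynomial (Fin 2) ℂ)
        = X 0 ^ 5 * X 1 - X 0 * X 1 ^ 5 from by ring]
    exact hD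
  | more k ih1 ih2 =>
    have key : (X 0 * X 1 * (X 0 ^ (4 * (k + 2)) - X 1 ^ (4 * (k + 2))) : MvPolynomial (Fin 2) ℂ)
        = (X 0 ^ 4 + X 1 ^ 4) * (X 0 * X 1 * (X 0 ^ (4 * (k + 1)) - X 1 ^ (4 * (k + 1))))
          - (X 0 ^ 2 * X 1 ^ 2) ^ 2 * (X 0 * X 1 * (X 0 ^ (4 * k) - X 1 ^ (4 * k))) := by ring
    rw [key]
    exact SA.sub_mem (SA.mul_mem hA ih2) (SA.mul_mem (SA.pow_mem hB 2) ih1)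

lemma p_mem (b k : ℕ) :
    (X 0 ^ (b + 4 * k) * X 1 ^ b + C ((-1 : ℂ) ^ b) * (X 0 ^ b * X 1 ^ (b + 4 * k)) : MvPolynomial (Fin 2) ℂ) ∈ SA := by
  rcases Nat.even_or_odd b with ⟨j, hj⟩ | ⟨j, hj⟩
  · subst hj
    rw [show ((-1 : ℂ) ^ (j + j)) = 1 from by rw [← two_mul]; exact (even_two_mul j).neg_one_pow]
    rw [show (X 0 ^ (j + j + 4 * k) * X 1 ^ (j + j) + C (1:ℂ) * (X 0 ^ (j + j) * X 1 ^ (j + j + 4 * k)) : MvPolynomial (Fin 2) ℂ)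
        = (X 0 ^ 2 * X 1 ^ 2) ^ j * (X 0 ^ (4 * k) + X 1 ^ (4 * k)) from by rw [map_one]; ring]
    exact SA.mul_mem (SA.pow_mem hB j) (s_mem k)
  · subst hj
    rw [show ((-1 : ℂ) ^ (2 * j + 1)) = -1 from (odd_two_mul_add_one j).neg_one_pow]
    rw [show (X 0 ^ (2 * j + 1 + 4 * k) * X 1 ^ (2 * j + 1) + C (-1 : ℂ) * (X 0 ^ (2 * j + 1) * X 1 ^ (2 * j + 1 + 4 * k)) : MvPolynomial (Fin 2) ℂ)
        = (X 0 ^ 2 * X 1 ^ 2) ^ j * (X 0 * X 1 * (X 0 ^ (4 * k) - X 1 ^ (4 * k))) from by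
          rw [show (C (-1 : ℂ) : MvPolynomial (Fin 2) ℂ) = -1 from by simp]; ring]
    exact SA.mul_mem (SA.pow_mem hB j) (d_mem k)


lemma invd_gen (c : ℂ) : act !![Complex.I, 0; 0, -Complex.I]
    (X 0 ^ 4 + X 1 ^ 4 + C c * X 0 ^ 2 * X 1 ^ 2)
    = X 0 ^ 4 + X 1 ^ 4 + C c * X 0 ^ 2 * X 1 ^ 2 := by
  have h4 : Complex.I ^ 4 = 1 := by norm_num [pow_succ, Complex.I_mul_I]
  have hn4 : (-Complex.I) ^ 4 = 1 := by norm_num [pow_succ, Complex.I_mul_I]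
  simp only [map_add, map_mul, map_pow, act_C, actd_X0, actd_X1]
  simp only [mul_pow, ← C_pow]
  rw [h4, hn4]
  simp only [map_one, one_mul]
  ring_nf
  rw [← map_pow, ← pow_mul]
  norm_num [h4]

lemma invs_gen (c : ℂ) : act !![0, 1; -1, 0]
    (X 0 ^ 4 + X 1 ^ 4 + C c * X 0 ^ 2 * X 1 ^ 2)
    = X 0 ^ 4 + X 1 ^ 4 + C c * X 0 ^ 2 * X 1 ^ 2 := by
  simp only [map_add, map_mul, map_pow, act_C, acts_X0, acts_X1]
  ring

lemma invs_D : act !![0, 1; -1, 0] (X 0 ^ 5 * X 1 - X 0 * X 1 ^ 5)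
    = X 0 ^ 5 * X 1 - X 0 * X 1 ^ 5 := by
  simp only [map_sub, map_mul, map_pow, acts_X0, acts_X1]
  ring

lemma invd_D : act !![Complex.I, 0; 0, -Complex.I] (X 0 ^ 5 * X 1 - X 0 * X 1 ^ 5)
    = X 0 ^ 5 * X 1 - X 0 * X 1 ^ 5 := by
  have h5 : Complex.I ^ 5 = Complex.I := by norm_num [pow_succ, Complex.I_mul_I]
  have hn5 : (-Complex.I) ^ 5 = -Complex.I := by norm_num [pow_succ, Complex.I_mul_I]
  simp only [map_sub, map_mul, map_pow, actd_X0, actd_X1]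
  simp only [mul_pow, ← C_pow]
  ring_nf
  rw [show (C (Complex.I^5) : MvPolynomial (Fin 2) ℂ) * X 0^5 * C (-Complex.I) * X 1
      = C (Complex.I^5 * -Complex.I) * (X 0^5 * X 1) from by rw [map_mul]; ring,
    show (X 0 : MvPolynomial (Fin 2) ℂ) * X 1^5 * C Complex.I * C (-Complex.I^5)
      = C (Complex.I * -Complex.I^5) * (X 0 * X 1^5) from by rw [map_mul]; ring,
    show Complex.I^5 * -Complex.I = 1 from by norm_num [pow_succ, Complex.I_mul_I],
    show Complex.I * -Complex.I^5 = 1 from by norm_num [pow_succ, Complex.I_mul_I]]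
  simp only [map_one, one_mul]
  ring


lemma Ipow_mod (n : ℕ) (h : Complex.I ^ n = 1) : n % 4 = 0 := by
  have h4 : Complex.I ^ 4 = 1 := by norm_num [pow_succ, Complex.I_mul_I]
  have hmod : Complex.I ^ n = Complex.I ^ (n % 4) := by
    conv_lhs => rw [← Nat.div_add_mod n 4]
    rw [pow_add, pow_mul, h4, one_pow, one_mul]
  rw [hmod] at h
  have hlt : n % 4 < 4 := Nat.mod_lt n (by norm_num)
  interval_cases hr : n % 4 <;> first
    | rfl
    | (exfalso; norm_num [pow_succ, Complex.I_mul_I, Complex.ext_iff] at h)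

lemma Imod (a b : ℕ) (h : Complex.I ^ a * (-Complex.I) ^ b = 1) : a % 4 = b % 4 := by
  have h3 : (-Complex.I) = Complex.I ^ 3 := by norm_num [pow_succ, Complex.I_mul_I]
  rw [h3, ← pow_mul, ← pow_add] at h
  have := Ipow_mod _ h
  omega

lemma key : ∀ (n : ℕ) (f : MvPolynomial (Fin 2) ℂ), f.support.card ≤ n →
    (∀ m ∈ f.support, (m 0) % 4 = (m 1) % 4) →
    (∀ m, coeff m f = (-1 : ℂ) ^ (m 0) * coeff (swp m) f) → f ∈ SA := by
  intro n
  induction n with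
  | zero =>
    intro f hcard _ _
    have : f.support = ∅ := Finset.card_eq_zero.mp (Nat.le_zero.mp hcard)
    rw [support_eq_empty.mp this]
    exact SA.zero_mem
  | succ n ih =>
    intro f hcard h1 h2
    by_cases hf : f.support = ∅
    · rw [support_eq_empty.mp hf]; exact SA.zero_mem
    obtain ⟨m₀, hm₀⟩ := Finset.nonempty_iff_ne_empty.mpr hf
    obtain ⟨m, hm, hge⟩ : ∃ m ∈ f.support, m 1 ≤ m 0 := by
      rcases le_total (m₀ 1) (m₀ 0) with h | h
      · exact ⟨m₀, hm₀, h⟩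
      · refine ⟨swp m₀, ?_, by simpa using h⟩
        rw [mem_support_iff] at hm₀ ⊢
        intro h0
        exact hm₀ (by rw [h2 m₀, h0, mul_zero])
    obtain ⟨a, ha⟩ : ∃ a, m 0 = a := ⟨_, rfl⟩
    obtain ⟨b, hb⟩ : ∃ b, m 1 = b := ⟨_, rfl⟩
    rw [ha, hb] at hge
    have hm_eq : m = Finsupp.single 0 a + Finsupp.single 1 b := by
      rw [← ha, ← hb]; exact fin2_finsupp_eq m
    have hsw_eq : swp m = Finsupp.single 0 b + Finsupp.single 1 a := by
      ext i; fin_cases i <;> simp [ha, hb, Finsupp.single_apply]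
    have hmod : a % 4 = b % 4 := by rw [← ha, ← hb]; exact h1 m hm
    have hc : coeff m f ≠ 0 := mem_support_iff.mp hm
    have hab2 : Even (a + b) := Nat.even_iff.mpr (by omega)
    have hpar : (-1 : ℂ) ^ a * (-1 : ℂ) ^ b = 1 := by
      rw [← pow_add]; exact hab2.neg_one_pow
    have hsq : ((-1 : ℂ) ^ a) * ((-1 : ℂ) ^ a) = 1 := by
      rw [← pow_add]; exact (Even.add_self a).neg_one_pow
    have h2m := h2 m
    rw [ha] at h2m
    -- coeff (swp m) f = (-1)^a * coeff m f
    have hswc : coeff (swp m) f = (-1 : ℂ) ^ a * coeff m f := by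
      linear_combination (-(-1 : ℂ)^a) * h2m + (-(coeff (swp m) f)) * hsq
    by_cases hab : a = b
    · -- diagonal case
      have hswm : swp m = m := by rw [hsw_eq, hm_eq, hab]
      have heven : Even a := by
        by_contra hodd
        have hone : (-1 : ℂ) ^ a = -1 := (Nat.not_even_iff_odd.mp hodd).neg_one_pow
        rw [hswm, hone] at h2m
        apply hc
        linear_combination h2m / 2
      obtain ⟨j, hj⟩ := heven
      set c := coeff m f with hcdef
      set g : MvPolynomial (Fin 2) ℂ := monomial m c with hgdef
      have hgS : g ∈ SA := by
        have : g = C c * (X 0 ^ 2 * X 1 ^ 2) ^ j := by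
          rw [hgdef, hm_eq, monomial_eq_prod, ← hab, hj]
          ring
        rw [this]
        refine SA.mul_mem ?_ (SA.pow_mem hB j)
        have := SA.algebraMap_mem c
        rwa [algebraMap_eq] at this
      have hco : ∀ m'', coeff m'' (f - g) = coeff m'' f - (if m = m'' then c else 0) := by
        intro m''
        rw [coeff_sub, hgdef, coeff_monomial]
      have hsupp : (f - g).support ⊆ f.support.erase m := by
        intro m'' hm''
        rw [mem_support_iff, hco] at hm''
        rw [Finset.mem_erase, mem_support_iff]
        refine ⟨?_, ?_⟩
        · rintro rfl
          apply hm''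
          rw [if_pos rfl, ← hcdef]
          ring
        · intro h0
          apply hm''
          rw [h0]
          have hne : ¬ (m = m'') := by
            rintro rfl
            exact hc (hcdef ▸ h0)
          rw [if_neg hne]
          ring
      have hfe : f = f - g + g := by ring
      rw [hfe]
      refine SA.add_mem (ih (f - g) ?_ ?_ ?_) hgS
      · calc (f - g).support.card ≤ (f.support.erase m).card := Finset.card_le_card hsupp
          _ ≤ n := by rw [Finset.card_erase_of_mem hm]; omega
      · intro m'' hm''
        exact h1 m'' (Finset.mem_of_mem_erase (hsupp hm''))
      · intro m''
        rw [hco, hco]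
        have hiff : (m = swp m'') ↔ (m = m'') := by
          constructor
          · intro h
            have := congrArg swp h
            rw [hswm, swp_swp] at this
            exact this
          · intro h
            rw [← h, hswm]
        by_cases e1 : m = m''
        · rw [if_pos e1, if_pos (hiff.mpr e1)]
          subst e1
          rw [hswm, ha]
          have hone : (-1 : ℂ) ^ a = 1 := by
            rw [hj]; exact (Even.add_self j).neg_one_pow
          rw [hone, ← hcdef]
          ring
        · rw [if_neg e1, if_neg (fun h => e1 (hiff.mp h))]
          linear_combination h2 m''
    · -- off-diagonal case: a > b
      have hlt : b < a := lt_of_le_of_ne hge (fun h => hab h.symm)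
      obtain ⟨k, hk⟩ : ∃ k, a = b + 4 * k := ⟨(a - b) / 4, by omega⟩
      set c := coeff m f with hcdef
      set p : MvPolynomial (Fin 2) ℂ := monomial m 1 + monomial (swp m) ((-1 : ℂ) ^ b) with hpdef
      have hpS : p ∈ SA := by
        have : p = X 0 ^ (b + 4 * k) * X 1 ^ b + C ((-1 : ℂ) ^ b) * (X 0 ^ b * X 1 ^ (b + 4 * k)) := by
          rw [hpdef, hsw_eq, hm_eq, monomial_eq_prod, monomial_eq_prod, map_one, ← hk]
          ring
        rw [this]
        exact p_mem b k
      have hCc : (C c : MvPolynomial (Fin 2) ℂ) ∈ SA := by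
        have := SA.algebraMap_mem c
        rwa [algebraMap_eq] at this
      have hgS : C c * p ∈ SA := SA.mul_mem hCc hpS
      have hmsw : m ≠ swp m := by
        intro h
        apply hab
        rw [ha.symm, hb.symm]
        calc m 0 = swp m 0 := by rw [← h]
          _ = m 1 := swp_apply0 m
      have hco : ∀ m'', coeff m'' (f - C c * p) = coeff m'' f
          - c * (if m = m'' then 1 else 0) - c * (-1 : ℂ) ^ b * (if swp m = m'' then 1 else 0) := by
        intro m''
        rw [coeff_sub, hpdef, coeff_C_mul, coeff_add, coeff_monomial, coeff_monomial,
          show (if swp m = m'' then ((-1:ℂ))^b else 0) = (-1:ℂ)^b * (if swp m = m'' then (1:ℂ) else 0) from by split <;> ring]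
        ring
      have h2b : ((-1 : ℂ) ^ b) * ((-1 : ℂ) ^ b) = 1 := by
        rw [← pow_add]; exact (Even.add_self b).neg_one_pow
      have habp : (-1 : ℂ) ^ a = (-1 : ℂ) ^ b := by
        linear_combination ((-1:ℂ)^b) * hpar - ((-1:ℂ)^a) * h2b
      have hcoswp : coeff (swp m) f = (-1 : ℂ) ^ b * c := by
        rw [hswc, habp]
      have hswp_iff : ∀ m'', (m = swp m'') ↔ (swp m = m'') := by
        intro m''
        constructor
        · intro h; rw [h, swp_swp]
        · intro h; rw [← h, swp_swp]
      have hswp_iff2 : ∀ m'', (swp m = swp m'') ↔ (m = m'') := by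
        intro m''
        exact ⟨fun h => swp_inj h, fun h => by rw [h]⟩
      have hsupp : (f - C c * p).support ⊆ f.support.erase m := by
        intro m'' hm''
        rw [mem_support_iff, hco] at hm''
        rw [Finset.mem_erase, mem_support_iff]
        constructor
        · rintro rfl
          rw [if_pos rfl, if_neg (fun h => hmsw h.symm)] at hm''
          simp at hm''
          exact hm'' (sub_eq_zero.mpr hcdef.symm)
        · intro h0
          apply hm''
          rw [h0]
          by_cases e1 : m = m''
          · exfalso
            apply hc
            rw [hcdef, e1]
            exact h0
          · rw [if_neg e1]
            by_cases e2 : swp m = m''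
            · exfalso
              apply hc
              have h0' : (-1:ℂ)^b * c = 0 := by rw [← hcoswp, e2]; exact h0
              have hb0 : ((-1:ℂ)^b) ≠ 0 := pow_ne_zero _ (by norm_num)
              rcases mul_eq_zero.mp h0' with h | h
              · exact absurd h hb0
              · exact h
            · rw [if_neg e2]
              ring
      have hfe : f = f - C c * p + C c * p := by ring
      rw [hfe]
      refine SA.add_mem (ih (f - C c * p) ?_ ?_ ?_) hgS
      · calc (f - C c * p).support.card ≤ (f.support.erase m).card := Finset.card_le_card hsupp
          _ ≤ n := by rw [Finset.card_erase_of_mem hm]; omega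
      · intro m'' hm''
        exact h1 m'' (Finset.mem_of_mem_erase (hsupp hm''))
      · intro m''
        rw [hco, hco]
        rw [show (if m = swp m'' then (1:ℂ) else 0) = (if swp m = m'' then (1:ℂ) else 0) from by
          rw [if_congr (hswp_iff m'') rfl rfl]]
        rw [show (if swp m = swp m'' then (1:ℂ) else 0) = (if m = m'' then (1:ℂ) else 0) from by
          rw [if_congr (hswp_iff2 m'') rfl rfl]]
        by_cases e1 : m = m''
        · have e2 : ¬ (swp m = m'') := fun h => hmsw (e1.trans h.symm)
          rw [if_pos e1, if_neg e2]
          subst e1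
          rw [hcoswp, ha, ← hcdef]
          ring
        · by_cases e2 : swp m = m''
          · rw [if_neg e1, if_pos e2]
            rw [← e2, swp_swp, hcoswp,
              show (swp m) 0 = b from by rw [swp_apply0, hb], ← hcdef]
            ring
          · rw [if_neg e1, if_neg e2]
            have := h2 m''
            linear_combination this

lemma fix_of_mem_SA (g : Matrix (Fin 2) (Fin 2) ℂ)
    (hg : ∀ p ∈ Sgen, act g p = p) {f : MvPolynomial (Fin 2) ℂ} (hf : f ∈ SA) :
    act g f = f := by
  have hle : SA ≤ AlgHom.equalizer (act g) (AlgHom.id ℂ (MvPolynomial (Fin 2) ℂ)) :=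
    Algebra.adjoin_le (fun p hp => hg p hp)
  exact hle hf

open MvPolynomial in
/-- Let `Q₈ ⊂ SL(2, ℂ)` be the quaternion group generated by `diag(√-1, -√-1)` and
`((0,1),(-1,0))` (realized as the multiplicative closure of these finite-order matrices),
acting on `ℂ[x, y]` by linear substitution. Then the invariant ring `ℂ[x, y]^{Q₈}` is the
`ℂ`-subalgebra generated by `x⁴ + y⁴ + 2√-3 x²y²`, `x⁴ + y⁴ - 2√-3 x²y²` and `x⁵y - xy⁵`. -/
theorem stmt_10 :
    {f : MvPolynomial (Fin 2) ℂ |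
      ∀ g ∈ Submonoid.closure
          ({!![Complex.I, 0; 0, -Complex.I], !![0, 1; -1, 0]} :
            Set (Matrix (Fin 2) (Fin 2) ℂ)),
        MvPolynomial.aeval (fun i : Fin 2 => ∑ j : Fin 2, C (g i j) * X j) f = f} =
    ↑(Algebra.adjoin ℂ
      ({X 0 ^ 4 + X 1 ^ 4 + C (2 * (Real.sqrt 3 : ℂ) * Complex.I) * X 0 ^ 2 * X 1 ^ 2,
        X 0 ^ 4 + X 1 ^ 4 - C (2 * (Real.sqrt 3 : ℂ) * Complex.I) * X 0 ^ 2 * X 1 ^ 2,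
        X 0 ^ 5 * X 1 - X 0 * X 1 ^ 5} : Set (MvPolynomial (Fin 2) ℂ))) := by
  apply Set.eq_of_subset_of_subset
  · intro f hf
    have hd : act !![Complex.I, 0; 0, -Complex.I] f = f :=
      hf _ (Submonoid.subset_closure (Set.mem_insert _ _))
    have hs : act !![0, 1; -1, 0] f = f :=
      hf _ (Submonoid.subset_closure (Set.mem_insert_of_mem _ rfl))
    show f ∈ SA
    apply key f.support.card f le_rfl
    · intro m hm
      have hco := congrArg (coeff m) hd
      rw [coeff_actd] at hco
      have h1 : Complex.I ^ (m 0) * (-Complex.I) ^ (m 1) = 1 := by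
        have hc := mem_support_iff.mp hm
        exact mul_right_cancel₀ hc (by rw [hco, one_mul])
      exact Imod _ _ h1
    · intro m
      conv_lhs => rw [← hs]
      rw [coeff_acts]
  · intro f hf
    have hf' : f ∈ SA := hf
    intro g hg
    show act g f = f
    induction hg using Submonoid.closure_induction with
    | mem x hx =>
      rcases hx with hx | hx
      · subst hx
        refine fix_of_mem_SA _ ?_ hf'
        intro p hp
        rcases hp with hp | hp | hp
        · subst hp; exact invd_gen _
        · subst hp
          rw [show (X 0 ^ 4 + X 1 ^ 4 - C (2 * (Real.sqrt 3 : ℂ) * Complex.I) * X 0 ^ 2 * X 1 ^ 2 : MvPolynomial (Fin 2) ℂ)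
              = X 0 ^ 4 + X 1 ^ 4 + C (-(2 * (Real.sqrt 3 : ℂ) * Complex.I)) * X 0 ^ 2 * X 1 ^ 2 from by
            rw [map_neg]; ring]
          exact invd_gen _
        · rw [hp]; exact invd_D
      · rw [Set.mem_singleton_iff] at hx
        subst hx
        refine fix_of_mem_SA _ ?_ hf'
        intro p hp
        rcases hp with hp | hp | hp
        · subst hp; exact invs_gen _
        · subst hp
          rw [show (X 0 ^ 4 + X 1 ^ 4 - C (2 * (Real.sqrt 3 : ℂ) * Complex.I) * X 0 ^ 2 * X 1 ^ 2 : MvPolynomial (Fin 2) ℂ)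
              = X 0 ^ 4 + X 1 ^ 4 + C (-(2 * (Real.sqrt 3 : ℂ) * Complex.I)) * X 0 ^ 2 * X 1 ^ 2 from by
            rw [map_neg]; ring]
          exact invs_gen _
        · rw [hp]; exact invs_D
    | one => exact act_one f
    | mul x y hx hy ihx ihy => rw [act_mul, ihx, ihy]
end

section
/- Let ζ = exp(2π√−1/8) and let G ⊂ SL(2, ℂ) be the binary tetrahedral group generated by diag(√−1, −√−1) and (1/√2)·((ζ, ζ), (ζ³, ζ⁷)), acting on ℂ[x, y] by linear substitution of the variables. Then the invariant ring ℂ[x, y]^G equals the ℂ-subalgebra generated by the three polynomials x¹² − 33x⁸y⁴ − 33x⁴y⁸ + y¹², x⁸ + 14x⁴y⁴ + y⁸, and x⁵y − xy⁵. -/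
open MvPolynomial

noncomputable section StmtAux

namespace Stmt12Aux

abbrev Rxy := MvPolynomial (Fin 2) ℂ

/-! ### scalar facts -/

def th : ℂ := 2 * (Real.sqrt 3 : ℂ) * Complex.I

lemma hth2 : th ^ 2 = -12 := by
  have h3 : ((Real.sqrt 3 : ℝ) : ℂ) ^ 2 = 3 := by
    norm_cast
    exact Real.sq_sqrt (by norm_num)
  simp only [th]
  rw [mul_pow, mul_pow, h3, Complex.I_sq]
  norm_num

lemma hth0 : th ≠ 0 := by
  intro h
  have h2 := hth2
  rw [h] at h2
  norm_num at h2

def om : ℂ := -(1/2) + th * (1/4)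

lemma om_def : om = -(1/2) + th * (1/4) := rfl

lemma hom_sum : om ^ 2 + om + 1 = 0 := by
  rw [om_def]; linear_combination (1/16 : ℂ) * hth2

lemma hom3 : om ^ 3 = 1 := by linear_combination (om - 1) * hom_sum

lemma hom_ne : om ≠ 1 := by
  intro h
  have h6 : th = 6 := by rw [om_def] at h; linear_combination 4 * h
  have h2 := hth2
  rw [h6] at h2
  norm_num at h2

lemma hom2_ne : om ^ 2 ≠ 1 := by
  intro h
  apply hom_ne
  calc om = om ^ 2 * om := by rw [h]; ring
  _ = om ^ 3 := by ring
  _ = 1 := hom3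

lemma om_pow_eq_one {n : ℕ} (h : om ^ n = 1) : n % 3 = 0 := by
  have key : om ^ n = om ^ (n % 3) := by
    conv_lhs => rw [← Nat.div_add_mod n 3]
    rw [pow_add, pow_mul, hom3, one_pow, one_mul]
  rw [key] at h
  have h3 : n % 3 < 3 := Nat.mod_lt _ (by norm_num)
  interval_cases hn : n % 3
  · rfl
  · rw [pow_one] at h; exact absurd h hom_ne
  · exact absurd h hom2_ne

lemma I_pow_eq_one {n : ℕ} (h : Complex.I ^ n = 1) : n % 4 = 0 := by
  have key : Complex.I ^ n = Complex.I ^ (n % 4) := by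
    conv_lhs => rw [← Nat.div_add_mod n 4]
    rw [pow_add, pow_mul, Complex.I_pow_four, one_pow, one_mul]
  rw [key] at h
  have h4 : n % 4 < 4 := Nat.mod_lt _ (by norm_num)
  interval_cases hn : n % 4
  · rfl
  · rw [pow_one] at h
    have := congrArg Complex.im h; simp at this
  · rw [Complex.I_sq] at h; norm_num at h
  · rw [pow_succ, Complex.I_sq] at h
    rw [show (-1 : ℂ) * Complex.I = -Complex.I by ring] at h
    have := congrArg Complex.im h
    simp at this

/-! ### facts about ζ -/

lemma sqrt2_sq : ((Real.sqrt 2 : ℝ) : ℂ) ^ 2 = 2 := by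
  norm_cast
  exact Real.sq_sqrt (by norm_num)

lemma sqrt2_ne : ((Real.sqrt 2 : ℝ) : ℂ) ≠ 0 := by
  intro h
  have h2 := sqrt2_sq
  rw [h] at h2
  norm_num at h2

lemma zeta_eq {ζ : ℂ} (hζ : ζ = Complex.exp (2 * Real.pi * Complex.I / 8)) :
    ζ = (Real.sqrt 2 : ℂ) / 2 * (1 + Complex.I) := by
  have harg : (2 * (Real.pi : ℂ) * Complex.I / 8) = ((Real.pi / 4 : ℝ) : ℂ) * Complex.I := by
    push_cast; ring
  rw [hζ, harg, Complex.exp_mul_I, ← Complex.ofReal_cos, ← Complex.ofReal_sin,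
    Real.cos_pi_div_four, Real.sin_pi_div_four]
  push_cast
  ring

lemma hz1 {ζ : ℂ} (hζ : ζ = Complex.exp (2 * Real.pi * Complex.I / 8)) :
    (Real.sqrt 2 : ℂ)⁻¹ * ζ = (1 + Complex.I) / 2 := by
  rw [zeta_eq hζ]
  rw [show ((Real.sqrt 2 : ℂ))⁻¹ * ((Real.sqrt 2 : ℂ) / 2 * (1 + Complex.I)) =
    ((Real.sqrt 2 : ℂ)⁻¹ * (Real.sqrt 2 : ℂ)) * ((1 + Complex.I) / 2) by ring,
    inv_mul_cancel₀ sqrt2_ne, one_mul]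

lemma hz2 {ζ : ℂ} (hζ : ζ = Complex.exp (2 * Real.pi * Complex.I / 8)) :
    ζ ^ 2 = Complex.I := by
  rw [zeta_eq hζ]
  have h2 := sqrt2_sq
  have hi := Complex.I_sq
  linear_combination ((1 + 2*Complex.I + Complex.I^2)/4) * h2 + (1/2 : ℂ) * hi

lemma hz3 {ζ : ℂ} (hζ : ζ = Complex.exp (2 * Real.pi * Complex.I / 8)) :
    (Real.sqrt 2 : ℂ)⁻¹ * ζ ^ 3 = (-1 + Complex.I) / 2 := by
  rw [show (Real.sqrt 2 : ℂ)⁻¹ * ζ ^ 3 = ζ ^ 2 * ((Real.sqrt 2 : ℂ)⁻¹ * ζ) by ring,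
    hz2 hζ, hz1 hζ]
  linear_combination (1/2 : ℂ) * Complex.I_sq

lemma hz7 {ζ : ℂ} (hζ : ζ = Complex.exp (2 * Real.pi * Complex.I / 8)) :
    (Real.sqrt 2 : ℂ)⁻¹ * ζ ^ 7 = (1 - Complex.I) / 2 := by
  rw [show (Real.sqrt 2 : ℂ)⁻¹ * ζ ^ 7 = (ζ ^ 2) ^ 3 * ((Real.sqrt 2 : ℂ)⁻¹ * ζ) by ring,
    hz2 hζ, hz1 hζ]
  linear_combination ((Complex.I ^ 2 + Complex.I - 1) / 2) * Complex.I_sq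

/-! ### the action -/

def mact (g : Matrix (Fin 2) (Fin 2) ℂ) : Rxy →ₐ[ℂ] Rxy :=
  aeval (fun i : Fin 2 => ∑ j : Fin 2, C (g i j) * X j)

lemma mact_apply (g : Matrix (Fin 2) (Fin 2) ℂ) (f : Rxy) :
    mact g f = aeval (fun i : Fin 2 => ∑ j : Fin 2, C (g i j) * X j) f := rfl

lemma mact_one : mact 1 = AlgHom.id ℂ Rxy := by
  have h : (fun i : Fin 2 => ∑ j : Fin 2, C ((1 : Matrix (Fin 2) (Fin 2) ℂ) i j) * X j) = X := by
    funext i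
    simp [Matrix.one_apply, Finset.sum_ite_eq, apply_ite (C (σ := Fin 2) (R := ℂ))]
  rw [mact, h, aeval_X_left]

lemma mact_mul (g h : Matrix (Fin 2) (Fin 2) ℂ) :
    (mact h).comp (mact g) = mact (g * h) := by
  apply MvPolynomial.algHom_ext
  intro i
  simp only [AlgHom.coe_comp, Function.comp_apply, mact, aeval_X, map_sum, map_mul, aeval_C,
    algebraMap_eq, Matrix.mul_apply, Finset.sum_mul, C_mul]
  rw [Finset.sum_comm]
  congr 1; funext j
  rw [Finset.mul_sum]
  congr 1; funext k
  ring

lemma eval_aeval (v : Fin 2 → ℂ) (g : Fin 2 → Rxy) (f : Rxy) :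
    eval v (aeval g f) = eval (fun i => eval v (g i)) f := by
  induction f using MvPolynomial.induction_on with
  | C => simp
  | add p q hp hq => simp [← aeval_eq_bind₁, hp, hq]
  | mul_X p i hp => simp [← aeval_eq_bind₁, hp]

/-! ### matrices and generators -/

def Mt : Matrix (Fin 2) (Fin 2) ℂ := !![Complex.I, 0; 0, -Complex.I]
def Msn : Matrix (Fin 2) (Fin 2) ℂ :=
  !![(1 + Complex.I)/2, (1 + Complex.I)/2; (-1 + Complex.I)/2, (1 - Complex.I)/2]
def Jm : Matrix (Fin 2) (Fin 2) ℂ := !![0, 1; -1, 0]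

def Qp : Rxy := X 0 ^ 12 - 33 * X 0 ^ 8 * X 1 ^ 4 - 33 * X 0 ^ 4 * X 1 ^ 8 + X 1 ^ 12
def Pp : Rxy := X 0 ^ 8 + 14 * X 0 ^ 4 * X 1 ^ 4 + X 1 ^ 8
def Wp : Rxy := X 0 ^ 5 * X 1 - X 0 * X 1 ^ 5

lemma hMsz {ζ : ℂ} (hζ : ζ = Complex.exp (2 * Real.pi * Complex.I / 8)) :
    !![(Real.sqrt 2 : ℂ)⁻¹ * ζ, (Real.sqrt 2 : ℂ)⁻¹ * ζ;
       (Real.sqrt 2 : ℂ)⁻¹ * ζ ^ 3, (Real.sqrt 2 : ℂ)⁻¹ * ζ ^ 7] = Msn := by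
  rw [hz1 hζ, hz3 hζ, hz7 hζ, Msn]

/-! ### invariance of the generators -/

lemma mact_t_Q : mact Mt Qp = Qp := by
  apply MvPolynomial.funext; intro v
  rw [mact_apply, eval_aeval]
  simp only [Qp, Mt, Fin.sum_univ_two, map_add, map_sub, map_mul, map_pow, map_ofNat,
    eval_X, eval_C, Matrix.cons_val', Matrix.cons_val_zero, Matrix.cons_val_one,
    Matrix.head_cons, Matrix.empty_val', Matrix.cons_val_fin_one, Matrix.head_fin_const,
    Matrix.of_apply]
  linear_combination ((-1)*(v 1)^12 + (1)*(v 1)^12*Complex.I^2 + (-1)*(v 1)^12*Complex.I^4 + (1)*(v 1)^12*Complex.I^6 + (-1)*(v 1)^12*Complex.I^8 + (1)*(v 1)^12*Complex.I^10 + (33)*(v 0)^4*(v 1)^8 + (-33)*(v 0)^4*(v 1)^8*Complex.I^2 + (33)*(v 0)^4*(v 1)^8*Complex.I^4 + (-33)*(v 0)^4*(v 1)^8*Complex.I^6 + (33)*(v 0)^4*(v 1)^8*Complex.I^8 + (-33)*(v 0)^4*(v 1)^8*Complex.I^10 + (33)*(v 0)^8*(v 1)^4 + (-33)*(v 0)^8*(v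 1)^4*Complex.I^2 + (33)*(v 0)^8*(v 1)^4*Complex.I^4 + (-33)*(v 0)^8*(v 1)^4*Complex.I^6 + (33)*(v 0)^8*(v 1)^4*Complex.I^8 + (-33)*(v 0)^8*(v 1)^4*Complex.I^10 + (-1)*(v 0)^12 + (1)*(v 0)^12*Complex.I^2 + (-1)*(v 0)^12*Complex.I^4 + (1)*(v 0)^12*Complex.I^6 + (-1)*(v 0)^12*Complex.I^8 + (1)*(v 0)^12*Complex.I^10) * Complex.I_sq

lemma mact_t_P : mact Mt Pp = Pp := by
  apply MvPolynomial.funext; intro v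
  rw [mact_apply, eval_aeval]
  simp only [Pp, Mt, Fin.sum_univ_two, map_add, map_sub, map_mul, map_pow, map_ofNat,
    eval_X, eval_C, Matrix.cons_val', Matrix.cons_val_zero, Matrix.cons_val_one,
    Matrix.head_cons, Matrix.empty_val', Matrix.cons_val_fin_one, Matrix.head_fin_const,
    Matrix.of_apply]
  linear_combination ((-1)*(v 1)^8 + (1)*(v 1)^8*Complex.I^2 + (-1)*(v 1)^8*Complex.I^4 + (1)*(v 1)^8*Complex.I^6 + (-14)*(v 0)^4*(v 1)^4 + (14)*(v 0)^4*(v 1)^4*Complex.I^2 + (-14)*(v 0)^4*(v 1)^4*Complex.I^4 + (14)*(v 0)^4*(v 1)^4*Complex.I^6 + (-1)*(v 0)^8 + (1)*(v 0)^8*Complex.I^2 + (-1)*(v 0)^8*Complex.I^4 + (1)*(v 0)^8*Complex.I^6) * Complex.I_sq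

lemma mact_t_W : mact Mt Wp = Wp := by
  apply MvPolynomial.funext; intro v
  rw [mact_apply, eval_aeval]
  simp only [Wp, Mt, Fin.sum_univ_two, map_add, map_sub, map_mul, map_pow, map_ofNat,
    eval_X, eval_C, Matrix.cons_val', Matrix.cons_val_zero, Matrix.cons_val_one,
    Matrix.head_cons, Matrix.empty_val', Matrix.cons_val_fin_one, Matrix.head_fin_const,
    Matrix.of_apply]
  linear_combination ((1)*(v 0)*(v 1)^5 + (-1)*(v 0)*(v 1)^5*Complex.I^2 + (1)*(v 0)*(v 1)^5*Complex.I^4 + (-1)*(v 0)^5*(v 1) + (1)*(v 0)^5*(v 1)*Complex.I^2 + (-1)*(v 0)^5*(v 1)*Complex.I^4) * Complex.I_sq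

lemma mact_s_Q : mact Msn Qp = Qp := by
  apply MvPolynomial.funext; intro v
  rw [mact_apply, eval_aeval]
  simp only [Qp, Msn, Fin.sum_univ_two, map_add, map_sub, map_mul, map_pow, map_ofNat,
    eval_X, eval_C, Matrix.cons_val', Matrix.cons_val_zero, Matrix.cons_val_one,
    Matrix.head_cons, Matrix.empty_val', Matrix.cons_val_fin_one, Matrix.head_fin_const,
    Matrix.of_apply]
  linear_combination ((-65/64)*(v 1)^12 + (65/64)*(v 1)^12*Complex.I^2 + (-1/2)*(v 1)^12*Complex.I^4 + (1/2)*(v 1)^12*Complex.I^6 + (1/64)*(v 1)^12*Complex.I^8 + (-1/64)*(v 1)^12*Complex.I^10 + (-3/16)*(v 0)*(v 1)^11*Complex.I + (9/4)*(v 0)*(v 1)^11*Complex.I^3 + (15/8)*(v 0)*(v 1)^11*Complex.I^5 + (9/4)*(v 0)*(v 1)^11*Complex.I^7 + (-3/16)*(v 0)*(v 1)^11*Complex.I^9 + (33/16)*(v 0)^2*(v 1)^10*Complex.I^2 + (231/16)*(v 0)^2*(v 1)^10*Complex.I^4 + (231/16)*(v 0)^2*(v 1)^10*Complex.I^6 +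 (33/16)*(v 0)^2*(v 1)^10*Complex.I^8 + (33/16)*(v 0)^3*(v 1)^9*Complex.I + (77/4)*(v 0)^3*(v 1)^9*Complex.I^3 + (539/8)*(v 0)^3*(v 1)^9*Complex.I^5 + (77/4)*(v 0)^3*(v 1)^9*Complex.I^7 + (33/16)*(v 0)^3*(v 1)^9*Complex.I^9 + (2145/64)*(v 0)^4*(v 1)^8 + (-1089/64)*(v 0)^4*(v 1)^8*Complex.I^2 + (132)*(v 0)^4*(v 1)^8*Complex.I^4 + (99)*(v 0)^4*(v 1)^8*Complex.I^6 + (1023/64)*(v 0)^4*(v 1)^8*Complex.I^8 + (33/64)*(v 0)^4*(v 1)^8*Complex.I^10 + (33/8)*(v 0)^5*(v 1)^7*Complex.I + (165/2)*(v 0)^5*(v 1)^7*Complex.I^3 + (891/4)*(v 0)^5*(v 1)^7*Complex.I^5 + (165/2)*(v 0)^5*(v 1)^7*Complex.I^7 + (33/8)*(v 0)^5*(v 1)^7*Complex.I^9 + (231/8)*(v 0)^6*(v 1)^6*Complex.I^2 + (1617/8)*(v 0)^6*(v 1)^6*Complex.I^4 + (1617/8)*(v 0)^6*(v 1)^6*Complex.I^6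 + (231/8)*(v 0)^6*(v 1)^6*Complex.I^8 + (33/8)*(v 0)^7*(v 1)^5*Complex.I + (165/2)*(v 0)^7*(v 1)^5*Complex.I^3 + (891/4)*(v 0)^7*(v 1)^5*Complex.I^5 + (165/2)*(v 0)^7*(v 1)^5*Complex.I^7 + (33/8)*(v 0)^7*(v 1)^5*Complex.I^9 + (2145/64)*(v 0)^8*(v 1)^4 + (-1089/64)*(v 0)^8*(v 1)^4*Complex.I^2 + (132)*(v 0)^8*(v 1)^4*Complex.I^4 + (99)*(v 0)^8*(v 1)^4*Complex.I^6 + (1023/64)*(v 0)^8*(v 1)^4*Complex.I^8 + (33/64)*(v 0)^8*(v 1)^4*Complex.I^10 + (33/16)*(v 0)^9*(v 1)^3*Complex.I + (77/4)*(v 0)^9*(v 1)^3*Complex.I^3 + (539/8)*(v 0)^9*(v 1)^3*Complex.I^5 + (77/4)*(v 0)^9*(v 1)^3*Complex.I^7 + (33/16)*(v 0)^9*(v 1)^3*Complex.I^9 + (33/16)*(v 0)^10*(v 1)^2*Complex.I^2 + (231/16)*(v 0)^10*(v 1)^2*Complex.I^4 + (231/16)*(v 0)^10*(v 1)^2*Complex.I^6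 + (33/16)*(v 0)^10*(v 1)^2*Complex.I^8 + (-3/16)*(v 0)^11*(v 1)*Complex.I + (9/4)*(v 0)^11*(v 1)*Complex.I^3 + (15/8)*(v 0)^11*(v 1)*Complex.I^5 + (9/4)*(v 0)^11*(v 1)*Complex.I^7 + (-3/16)*(v 0)^11*(v 1)*Complex.I^9 + (-65/64)*(v 0)^12 + (65/64)*(v 0)^12*Complex.I^2 + (-1/2)*(v 0)^12*Complex.I^4 + (1/2)*(v 0)^12*Complex.I^6 + (1/64)*(v 0)^12*Complex.I^8 + (-1/64)*(v 0)^12*Complex.I^10) * Complex.I_sq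

lemma mact_s_P : mact Msn Pp = Pp := by
  apply MvPolynomial.funext; intro v
  rw [mact_apply, eval_aeval]
  simp only [Pp, Msn, Fin.sum_univ_two, map_add, map_sub, map_mul, map_pow, map_ofNat,
    eval_X, eval_C, Matrix.cons_val', Matrix.cons_val_zero, Matrix.cons_val_one,
    Matrix.head_cons, Matrix.empty_val', Matrix.cons_val_fin_one, Matrix.head_fin_const,
    Matrix.of_apply]
  linear_combination ((-15/16)*(v 1)^8 + (15/16)*(v 1)^8*Complex.I^2 + (-1/16)*(v 1)^8*Complex.I^4 + (1/16)*(v 1)^8*Complex.I^6 + (1/2)*(v 0)*(v 1)^7*Complex.I + (3)*(v 0)*(v 1)^7*Complex.I^3 + (1/2)*(v 0)*(v 1)^7*Complex.I^5 + (7)*(v 0)^2*(v 1)^6*Complex.I^2 + (7)*(v 0)^2*(v 1)^6*Complex.I^4 + (7/2)*(v 0)^3*(v 1)^5*Complex.I + (21)*(v 0)^3*(v 1)^5*Complex.I^3 + (7/2)*(v 0)^3*(v 1)^5*Complex.I^5 + (-105/8)*(v 0)^4*(v 1)^4 + (217/8)*(v 0)^4*(v 1)^4*Complex.I^2 + (105/8)*(v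 0)^4*(v 1)^4*Complex.I^4 + (7/8)*(v 0)^4*(v 1)^4*Complex.I^6 + (7/2)*(v 0)^5*(v 1)^3*Complex.I + (21)*(v 0)^5*(v 1)^3*Complex.I^3 + (7/2)*(v 0)^5*(v 1)^3*Complex.I^5 + (7)*(v 0)^6*(v 1)^2*Complex.I^2 + (7)*(v 0)^6*(v 1)^2*Complex.I^4 + (1/2)*(v 0)^7*(v 1)*Complex.I + (3)*(v 0)^7*(v 1)*Complex.I^3 + (1/2)*(v 0)^7*(v 1)*Complex.I^5 + (-15/16)*(v 0)^8 + (15/16)*(v 0)^8*Complex.I^2 + (-1/16)*(v 0)^8*Complex.I^4 + (1/16)*(v 0)^8*Complex.I^6) * Complex.I_sq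

lemma mact_s_W : mact Msn Wp = Wp := by
  apply MvPolynomial.funext; intro v
  rw [mact_apply, eval_aeval]
  simp only [Wp, Msn, Fin.sum_univ_two, map_add, map_sub, map_mul, map_pow, map_ofNat,
    eval_X, eval_C, Matrix.cons_val', Matrix.cons_val_zero, Matrix.cons_val_one,
    Matrix.head_cons, Matrix.empty_val', Matrix.cons_val_fin_one, Matrix.head_fin_const,
    Matrix.of_apply]
  linear_combination ((1/8)*(v 1)^6*Complex.I + (-1/8)*(v 1)^6*Complex.I^3 + (9/8)*(v 0)*(v 1)^5 + (-1/2)*(v 0)*(v 1)^5*Complex.I^2 + (-1/8)*(v 0)*(v 1)^5*Complex.I^4 + (5/8)*(v 0)^2*(v 1)^4*Complex.I + (-5/8)*(v 0)^2*(v 1)^4*Complex.I^3 + (-5/8)*(v 0)^4*(v 1)^2*Complex.I + (5/8)*(v 0)^4*(v 1)^2*Complex.I^3 + (-9/8)*(v 0)^5*(v 1) + (1/2)*(v 0)^5*(v 1)*Complex.I^2 + (1/8)*(v 0)^5*(v 1)*Complex.I^4 + (-1/8)*(v 0)^6*Complex.I + (1/8)*(v 0)^6*Complex.I^3) * Comp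lex.I_sq

lemma hJword : Mt * Msn * Msn * Mt * Msn = Jm := by
  ext i j
  fin_cases i <;> fin_cases j
  · simp only [Mt, Msn, Jm, Matrix.mul_apply, Fin.sum_univ_two, Fin.isValue, Fin.zero_eta,
      Fin.mk_one, Matrix.cons_val', Matrix.cons_val_zero, Matrix.cons_val_one,
      Matrix.head_cons, Matrix.empty_val', Matrix.cons_val_fin_one, Matrix.head_fin_const,
      Matrix.of_apply]
    linear_combination ((1/4)*Complex.I^2 + (1/4)*Complex.I^3) * Complex.I_sq
  · simp only [Mt, Msn, Jm, Matrix.mul_apply, Fin.sum_univ_two, Fin.isValue, Fin.zero_eta,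
      Fin.mk_one, Matrix.cons_val', Matrix.cons_val_zero, Matrix.cons_val_one,
      Matrix.head_cons, Matrix.empty_val', Matrix.cons_val_fin_one, Matrix.head_fin_const,
      Matrix.of_apply]
    linear_combination ((-1) + (3/4)*Complex.I^2 + (1/4)*Complex.I^3) * Complex.I_sq
  · simp only [Mt, Msn, Jm, Matrix.mul_apply, Fin.sum_univ_two, Fin.isValue, Fin.zero_eta,
      Fin.mk_one, Matrix.cons_val', Matrix.cons_val_zero, Matrix.cons_val_one,
      Matrix.head_cons, Matrix.empty_val', Matrix.cons_val_fin_one, Matrix.head_fin_const,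
      Matrix.of_apply]
    linear_combination ((1) + (-3/4)*Complex.I^2 + (1/4)*Complex.I^3) * Complex.I_sq
  · simp only [Mt, Msn, Jm, Matrix.mul_apply, Fin.sum_univ_two, Fin.isValue, Fin.zero_eta,
      Fin.mk_one, Matrix.cons_val', Matrix.cons_val_zero, Matrix.cons_val_one,
      Matrix.head_cons, Matrix.empty_val', Matrix.cons_val_fin_one, Matrix.head_fin_const,
      Matrix.of_apply]
    linear_combination ((1/4)*Complex.I^2 + (-1/4)*Complex.I^3) * Complex.I_sq

/-! ### diagonal scaling and coefficients -/

def dscale (α β : ℂ) : Rxy →ₐ[ℂ] Rxy := aeval ![C α * X 0, C β * X 1]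

lemma monomial_eq₂ (m : Fin 2 →₀ ℕ) (c : ℂ) :
    (monomial m c : Rxy) = C c * X 0 ^ m 0 * X 1 ^ m 1 := by
  rw [monomial_eq, Finsupp.prod_fintype _ _ (fun i => pow_zero _), Fin.prod_univ_two, mul_assoc]

lemma dscale_monomial (α β : ℂ) (m : Fin 2 →₀ ℕ) (c : ℂ) :
    dscale α β (monomial m c) = monomial m (α ^ m 0 * β ^ m 1 * c) := by
  rw [monomial_eq₂, monomial_eq₂]
  simp only [dscale, map_mul, map_pow, aeval_C, aeval_X, algebraMap_eq,
    Matrix.cons_val_zero, Matrix.cons_val_one, Matrix.head_cons]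
  ring

lemma dscale_coeff (α β : ℂ) (g : Rxy) (m : Fin 2 →₀ ℕ) :
    coeff m (dscale α β g) = α ^ m 0 * β ^ m 1 * coeff m g := by
  conv_lhs => rw [g.as_sum, map_sum,
    Finset.sum_congr rfl (fun m' _ => dscale_monomial α β m' (coeff m' g))]
  rw [coeff_sum, Finset.sum_eq_single m]
  · rw [coeff_monomial, if_pos rfl]
  · intro b _ hb; rw [coeff_monomial, if_neg hb]
  · intro hm; rw [coeff_monomial, if_pos rfl, notMem_support_iff.mp hm, mul_zero]

lemma dscale_support {α β : ℂ} {g : Rxy} (hg : dscale α β g = g) {m : Fin 2 →₀ ℕ}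
    (hm : m ∈ g.support) : α ^ m 0 * β ^ m 1 = 1 := by
  have h := dscale_coeff α β g m
  rw [hg] at h
  have hc : coeff m g ≠ 0 := mem_support_iff.mp hm
  have h0 : (α ^ m 0 * β ^ m 1 - 1) * coeff m g = 0 := by linear_combination -h
  rcases mul_eq_zero.mp h0 with h1 | h1
  · linear_combination h1
  · exact absurd h1 hc

/-! ### power sum sequences -/

def Sq : ℕ → Rxy
  | 0 => 2
  | 1 => X 0
  | (k+2) => X 0 * Sq (k+1) - X 1 ^ 2 * Sq k

def Qq : ℕ → Rxy
  | 0 => 0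
  | 1 => 1
  | (k+2) => X 0 * Qq (k+1) - X 1 ^ 2 * Qq k

def Psi : Rxy →ₐ[ℂ] Rxy := aeval ![X 0 ^ 4 + X 1 ^ 4, X 0 ^ 2 * X 1 ^ 2]

lemma Psi_X0 : Psi (X 0) = X 0 ^ 4 + X 1 ^ 4 := by simp [Psi]
lemma Psi_X1 : Psi (X 1) = X 0 ^ 2 * X 1 ^ 2 := by simp [Psi]
lemma Psi_C (c : ℂ) : Psi (C c) = C c := by simp [Psi]

lemma Psi_Sq (k : ℕ) : Psi (Sq k) = X 0 ^ (4*k) + X 1 ^ (4*k) := by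
  have key : ∀ n, Psi (Sq n) = X 0 ^ (4*n) + X 1 ^ (4*n) ∧
      Psi (Sq (n+1)) = X 0 ^ (4*(n+1)) + X 1 ^ (4*(n+1)) := by
    intro n
    induction n with
    | zero =>
      constructor
      · show Psi 2 = _; rw [map_ofNat]; norm_num
      · show Psi (X 0) = _; rw [Psi_X0]
    | succ n ih =>
      refine ⟨ih.2, ?_⟩
      show Psi (X 0 * Sq (n+1) - X 1 ^ 2 * Sq n) = _
      rw [map_sub, map_mul, map_mul, map_pow, ih.1, ih.2, Psi_X0, Psi_X1]
      ring
  exact (key k).1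

lemma Psi_Qq (k : ℕ) : Wp * Psi (Qq k) = X 0 ^ (4*k+1) * X 1 - X 0 * X 1 ^ (4*k+1) := by
  have key : ∀ n, Wp * Psi (Qq n) = X 0 ^ (4*n+1) * X 1 - X 0 * X 1 ^ (4*n+1) ∧
      Wp * Psi (Qq (n+1)) = X 0 ^ (4*(n+1)+1) * X 1 - X 0 * X 1 ^ (4*(n+1)+1) := by
    intro n
    induction n with
    | zero =>
      constructor
      · show Wp * Psi 0 = _; rw [map_zero]; ring
      · show Wp * Psi 1 = _; rw [map_one, Wp]; ring
    | succ n ih =>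
      refine ⟨ih.2, ?_⟩
      show Wp * Psi (X 0 * Qq (n+1) - X 1 ^ 2 * Qq n) = _
      rw [map_sub, map_mul, map_mul, map_pow, Psi_X0, Psi_X1]
      rw [show Wp * ((X 0 ^ 4 + X 1 ^ 4) * Psi (Qq (n+1)) -
        (X 0 ^ 2 * X 1 ^ 2) ^ 2 * Psi (Qq n)) =
        (X 0 ^ 4 + X 1 ^ 4) * (Wp * Psi (Qq (n+1))) -
        (X 0 ^ 2 * X 1 ^ 2) ^ 2 * (Wp * Psi (Qq n)) by ring, ih.1, ih.2]
      ring
  exact (key k).1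

/-! ### the Q8-invariant decomposition -/

def hb (a b : ℕ) : Rxy := X 0 ^ a * X 1 ^ b + C ((-1 : ℂ) ^ b) * (X 0 ^ b * X 1 ^ a)

def Msub : Submodule ℂ Rxy where
  carrier := {g | ∃ A B : Rxy, g = Psi A + Wp * Psi B}
  add_mem' := by
    rintro a b ⟨A1, B1, rfl⟩ ⟨A2, B2, rfl⟩
    exact ⟨A1 + A2, B1 + B2, by rw [map_add, map_add]; ring⟩
  zero_mem' := ⟨0, 0, by simp⟩
  smul_mem' := by
    rintro c g ⟨A, B, rfl⟩
    refine ⟨C c * A, C c * B, ?_⟩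
    rw [smul_eq_C_mul, map_mul, map_mul, Psi_C]
    ring

lemma hb_mem_of_le {a b : ℕ} (hle : b ≤ a) (hmod : a % 4 = b % 4) : hb a b ∈ Msub := by
  obtain ⟨k, hk⟩ : ∃ k, a = b + 4 * k := by
    obtain ⟨k, hk⟩ : 4 ∣ a - b := by omega
    exact ⟨k, by omega⟩
  subst hk
  rcases Nat.even_or_odd b with he | ho
  · obtain ⟨c, hc⟩ := he
    refine ⟨X 1 ^ c * Sq k, 0, ?_⟩
    rw [map_mul, map_pow, Psi_Sq, Psi_X1, map_zero, mul_zero, add_zero, hb,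
      Even.neg_one_pow ⟨c, hc⟩, map_one, one_mul, hc]
    ring
  · obtain ⟨c, hc⟩ := ho
    refine ⟨0, X 1 ^ c * Qq k, ?_⟩
    rw [map_zero, zero_add, map_mul, map_pow, Psi_X1, hb, Odd.neg_one_pow ⟨c, hc⟩,
      map_neg, map_one,
      show Wp * ((X 0 ^ 2 * X 1 ^ 2) ^ c * Psi (Qq k)) =
        (X 0 ^ 2 * X 1 ^ 2) ^ c * (Wp * Psi (Qq k)) by ring, Psi_Qq, hc]
    ring

lemma hb_mem {a b : ℕ} (hmod : a % 4 = b % 4) : hb a b ∈ Msub := by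
  rcases le_total b a with h | h
  · exact hb_mem_of_le h hmod
  · have hpar : (-1 : ℂ) ^ a = (-1 : ℂ) ^ b := by
      rcases Nat.even_or_odd a with he | ho
      · rw [Even.neg_one_pow he, Even.neg_one_pow (by
          rw [Nat.even_iff] at he ⊢; omega)]
      · rw [Odd.neg_one_pow ho, Odd.neg_one_pow (by
          rw [Nat.odd_iff] at ho ⊢; omega)]
    have heq : hb a b = ((-1 : ℂ) ^ b) • hb b a := by
      rw [smul_eq_C_mul, hb, hb, hpar, mul_add]
      rw [show (C ((-1:ℂ)^b) : Rxy) * (C ((-1:ℂ)^b) * (X 0 ^ a * X 1 ^ b)) =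
        C ((-1:ℂ)^b * (-1:ℂ)^b) * (X 0 ^ a * X 1 ^ b) by rw [map_mul]; ring,
        ← mul_pow]
      norm_num
      ring
    rw [heq]
    exact Msub.smul_mem _ (hb_mem_of_le h hmod.symm)

lemma invariant_decomp {f : Rxy} (ht : dscale Complex.I (-Complex.I) f = f)
    (hj : aeval ![X 1, -X 0] f = f) : f ∈ Msub := by
  have hsupp : ∀ m ∈ f.support, (m 0) % 4 = (m 1) % 4 := by
    intro m hm
    have h1 := dscale_support ht hm
    have h2 : Complex.I ^ (m 0 + 3 * m 1) = 1 := by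
      rw [pow_add, pow_mul]
      rw [show Complex.I ^ 3 = -Complex.I by
        rw [pow_succ, Complex.I_sq]; ring]
      exact h1
    have := I_pow_eq_one h2
    omega
  have e2 : aeval ![X 1, -X 0] f =
      ∑ m ∈ f.support, C ((-1:ℂ) ^ (m 1) * coeff m f) * ((X 0 : Rxy) ^ m 1 * X 1 ^ m 0) := by
    conv_lhs => rw [f.as_sum, map_sum]
    refine Finset.sum_congr rfl fun m _ => ?_
    rw [monomial_eq₂]
    simp only [map_mul, map_pow, aeval_C, aeval_X, algebraMap_eq,
      Matrix.cons_val_zero, Matrix.cons_val_one, Matrix.head_cons, map_neg, map_one]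
    ring
  have e1 : f = ∑ m ∈ f.support, C (coeff m f) * (X 0 ^ m 0 * X 1 ^ m 1) := by
    conv_lhs => rw [f.as_sum]
    exact Finset.sum_congr rfl fun m _ => by rw [monomial_eq₂]; ring
  have hdecomp : f = ∑ m ∈ f.support, (coeff m f * (1/2 : ℂ)) • hb (m 0) (m 1) := by
    have hsum : ∑ m ∈ f.support, (coeff m f * (1/2 : ℂ)) • hb (m 0) (m 1) =
        C (1/2 : ℂ) * ((∑ m ∈ f.support, C (coeff m f) * (X 0 ^ m 0 * X 1 ^ m 1)) +
          ∑ m ∈ f.support, C ((-1:ℂ) ^ (m 1) * coeff m f) * ((X 0 : Rxy) ^ m 1 * X 1 ^ m 0)) := by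
      rw [mul_add, Finset.mul_sum, Finset.mul_sum, ← Finset.sum_add_distrib]
      refine Finset.sum_congr rfl fun m _ => ?_
      rw [smul_eq_C_mul, hb, map_mul, map_mul]
      ring
    rw [hsum, ← e2, ← e1, hj]
    rw [show (C (1/2 : ℂ) : Rxy) * (f + f) = (C (1/2 : ℂ) * C 2) * f by
      rw [map_ofNat]; ring]
    rw [← map_mul]
    norm_num
  rw [hdecomp]
  exact Submodule.sum_mem _ fun m hm => Msub.smul_mem _ (hb_mem (hsupp m hm))

/-! ### the ℤ/3 part -/

def sigma : Rxy →ₐ[ℂ] Rxy :=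
  aeval ![C (-(1/2) : ℂ) * X 0 - C (3 : ℂ) * X 1, C (1/4 : ℂ) * X 0 - C (1/2 : ℂ) * X 1]

def Phi : Rxy →ₐ[ℂ] Rxy := aeval ![X 0 + C th * X 1, X 0 - C th * X 1]

def Phi' : Rxy →ₐ[ℂ] Rxy :=
  aeval ![C (1/2 : ℂ) * (X 0 + X 1), C th⁻¹ * C (1/2 : ℂ) * (X 0 - X 1)]

lemma sigma_C (c : ℂ) : sigma (C c) = C c := by simp [sigma]

lemma Phi_Phi' (g : Rxy) : Phi (Phi' g) = g := by
  have h : Phi.comp Phi' = AlgHom.id ℂ Rxy := by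
    apply MvPolynomial.algHom_ext
    intro i
    fin_cases i <;>
    · apply MvPolynomial.funext; intro v
      simp only [AlgHom.coe_comp, Function.comp_apply, AlgHom.coe_id, id_eq, Phi, Phi',
        aeval_X, eval_aeval, map_add, map_sub, map_mul, eval_C, eval_X, Fin.isValue,
        Fin.zero_eta, Fin.mk_one, Matrix.cons_val_zero, Matrix.cons_val_one, Matrix.head_cons]
      field_simp [hth0]
      try ring
  exact AlgHom.congr_fun h g

lemma Phi'_Phi (g : Rxy) : Phi' (Phi g) = g := by
  have h : Phi'.comp Phi = AlgHom.id ℂ Rxy := by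
    apply MvPolynomial.algHom_ext
    intro i
    fin_cases i <;>
    · apply MvPolynomial.funext; intro v
      simp only [AlgHom.coe_comp, Function.comp_apply, AlgHom.coe_id, id_eq, Phi, Phi',
        aeval_X, eval_aeval, map_add, map_sub, map_mul, eval_C, eval_X, Fin.isValue,
        Fin.zero_eta, Fin.mk_one, Matrix.cons_val_zero, Matrix.cons_val_one, Matrix.head_cons]
      field_simp [hth0]
      try ring
  exact AlgHom.congr_fun h g

lemma sigma_Phi : sigma.comp Phi = Phi.comp (dscale om (om ^ 2)) := by
  apply MvPolynomial.algHom_ext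
  intro i
  fin_cases i
  · apply MvPolynomial.funext; intro v
    simp only [AlgHom.coe_comp, Function.comp_apply, sigma, Phi, dscale,
      aeval_X, eval_aeval, map_add, map_sub, map_mul, map_pow, eval_C, eval_X, Fin.isValue,
      Fin.zero_eta, Fin.mk_one, Matrix.cons_val_zero, Matrix.cons_val_one, Matrix.head_cons]
    rw [om_def]
    linear_combination ((-1/4)*(v 1)) * hth2
  · apply MvPolynomial.funext; intro v
    simp only [AlgHom.coe_comp, Function.comp_apply, sigma, Phi, dscale,
      aeval_X, eval_aeval, map_add, map_sub, map_mul, map_pow, eval_C, eval_X, Fin.isValue,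
      Fin.zero_eta, Fin.mk_one, Matrix.cons_val_zero, Matrix.cons_val_one, Matrix.head_cons]
    rw [om_def]
    linear_combination ((-1/4)*(v 1) + (1/16)*(v 1)*th + (-1/16)*(v 0)) * hth2

lemma sigma_cube (g : Rxy) : sigma (sigma (sigma g)) = g := by
  have h : (sigma.comp sigma).comp sigma = AlgHom.id ℂ Rxy := by
    apply MvPolynomial.algHom_ext
    intro i
    fin_cases i <;>
    · apply MvPolynomial.funext; intro v
      simp only [AlgHom.coe_comp, Function.comp_apply, AlgHom.coe_id, id_eq, sigma,
        aeval_X, eval_aeval, map_add, map_sub, map_mul, eval_C, eval_X, Fin.isValue,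
        Fin.zero_eta, Fin.mk_one, Matrix.cons_val_zero, Matrix.cons_val_one, Matrix.head_cons]
      ring
  exact AlgHom.congr_fun h g

lemma mact_Msn_Psi : (mact Msn).comp Psi = Psi.comp sigma := by
  apply MvPolynomial.algHom_ext
  intro i
  fin_cases i
  · apply MvPolynomial.funext; intro v
    simp only [AlgHom.coe_comp, Function.comp_apply, mact, Psi, sigma, Msn,
      aeval_X, eval_aeval, map_add, map_sub, map_mul, map_pow, eval_C, eval_X, Fin.isValue,
      Fin.zero_eta, Fin.mk_one, Fin.sum_univ_two, Matrix.cons_val', Matrix.cons_val_zero,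
      Matrix.cons_val_one, Matrix.head_cons, Matrix.empty_val', Matrix.cons_val_fin_one,
      Matrix.head_fin_const, Matrix.of_apply]
    linear_combination ((5/8)*(v 1)^4 + (1/8)*(v 1)^4*Complex.I^2 + (2)*(v 0)*(v 1)^3*Complex.I + (15/4)*(v 0)^2*(v 1)^2 + (3/4)*(v 0)^2*(v 1)^2*Complex.I^2 + (2)*(v 0)^3*(v 1)*Complex.I + (5/8)*(v 0)^4 + (1/8)*(v 0)^4*Complex.I^2) * Complex.I_sq
  · apply MvPolynomial.funext; intro v
    simp only [AlgHom.coe_comp, Function.comp_apply, mact, Psi, sigma, Msn,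
      aeval_X, eval_aeval, map_add, map_sub, map_mul, map_pow, eval_C, eval_X, Fin.isValue,
      Fin.zero_eta, Fin.mk_one, Fin.sum_univ_two, Matrix.cons_val', Matrix.cons_val_zero,
      Matrix.cons_val_one, Matrix.head_cons, Matrix.empty_val', Matrix.cons_val_fin_one,
      Matrix.head_fin_const, Matrix.of_apply]
    linear_combination ((-3/16)*(v 1)^4 + (1/16)*(v 1)^4*Complex.I^2 + (3/8)*(v 0)^2*(v 1)^2 + (-1/8)*(v 0)^2*(v 1)^2*Complex.I^2 + (-3/16)*(v 0)^4 + (1/16)*(v 0)^4*Complex.I^2) * Complex.I_sq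

lemma Theta_UV : Psi (Phi (X 0 * X 1)) = Pp := by
  apply MvPolynomial.funext; intro v
  simp only [Phi, Psi, Pp, aeval_X, eval_aeval, map_add, map_sub, map_mul, map_pow,
    map_ofNat, eval_C, eval_X, Fin.isValue, Matrix.cons_val_zero, Matrix.cons_val_one,
    Matrix.head_cons]
  linear_combination ((-1)*(v 0)^4*(v 1)^4) * hth2

lemma Theta_U3 : Psi (Phi (X 0 ^ 3)) = Qp + C (3 * th) * Wp ^ 2 := by
  apply MvPolynomial.funext; intro v
  simp only [Phi, Psi, Qp, Wp, aeval_X, eval_aeval, map_add, map_sub, map_mul, map_pow,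
    map_ofNat, eval_C, eval_X, Fin.isValue, Matrix.cons_val_zero, Matrix.cons_val_one,
    Matrix.head_cons]
  linear_combination ((3)*(v 0)^4*(v 1)^8 + (1)*(v 0)^6*(v 1)^6*th + (3)*(v 0)^8*(v 1)^4) * hth2

lemma Theta_V3 : Psi (Phi (X 1 ^ 3)) = Qp - C (3 * th) * Wp ^ 2 := by
  apply MvPolynomial.funext; intro v
  simp only [Phi, Psi, Qp, Wp, aeval_X, eval_aeval, map_add, map_sub, map_mul, map_pow,
    map_ofNat, eval_C, eval_X, Fin.isValue, Matrix.cons_val_zero, Matrix.cons_val_one,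
    Matrix.head_cons]
  linear_combination ((3)*(v 0)^4*(v 1)^8 + (-1)*(v 0)^6*(v 1)^6*th + (3)*(v 0)^8*(v 1)^4) * hth2

/-! ### membership for mod-3 supported polynomials -/

lemma mono3_mem {a b : ℕ} (h : a % 3 = b % 3) :
    (X 0 : Rxy) ^ a * X 1 ^ b ∈
      Algebra.adjoin ℂ ({X 0 * X 1, X 0 ^ 3, X 1 ^ 3} : Set Rxy) := by
  have hXY : (X 0 : Rxy) * X 1 ∈ Algebra.adjoin ℂ ({X 0 * X 1, X 0 ^ 3, X 1 ^ 3} : Set Rxy) :=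
    Algebra.subset_adjoin (Set.mem_insert _ _)
  have hX3 : (X 0 : Rxy) ^ 3 ∈ Algebra.adjoin ℂ ({X 0 * X 1, X 0 ^ 3, X 1 ^ 3} : Set Rxy) :=
    Algebra.subset_adjoin (Set.mem_insert_of_mem _ (Set.mem_insert _ _))
  have hY3 : (X 1 : Rxy) ^ 3 ∈ Algebra.adjoin ℂ ({X 0 * X 1, X 0 ^ 3, X 1 ^ 3} : Set Rxy) :=
    Algebra.subset_adjoin (Set.mem_insert_of_mem _ (Set.mem_insert_of_mem _ rfl))
  rcases le_total b a with hle | hle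
  · obtain ⟨k, hk⟩ : ∃ k, a = b + 3 * k := ⟨(a - b)/3, by omega⟩
    subst hk
    rw [show (X 0:Rxy) ^ (b + 3*k) * X 1 ^ b = ((X 0:Rxy) * X 1) ^ b * ((X 0:Rxy) ^ 3) ^ k by
      ring]
    exact mul_mem (pow_mem hXY b) (pow_mem hX3 k)
  · obtain ⟨k, hk⟩ : ∃ k, b = a + 3 * k := ⟨(b - a)/3, by omega⟩
    subst hk
    rw [show (X 0:Rxy) ^ a * X 1 ^ (a + 3*k) = ((X 0:Rxy) * X 1) ^ a * ((X 1:Rxy) ^ 3) ^ k by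
      ring]
    exact mul_mem (pow_mem hXY a) (pow_mem hY3 k)

lemma mem_adjoin3 {g : Rxy} (hsupp : ∀ m ∈ g.support, (m 0) % 3 = (m 1) % 3) :
    g ∈ Algebra.adjoin ℂ ({X 0 * X 1, X 0 ^ 3, X 1 ^ 3} : Set Rxy) := by
  rw [g.as_sum]
  refine Subalgebra.sum_mem _ fun m hm => ?_
  rw [monomial_eq₂, mul_assoc]
  refine mul_mem ?_ (mono3_mem (hsupp m hm))
  rw [← algebraMap_eq]
  exact Subalgebra.algebraMap_mem _ _

/-! ### the main σ-invariance lemma -/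

lemma sigma_invariant_mem {A0 : Rxy} (hA0 : sigma A0 = A0) :
    Psi A0 ∈ Algebra.adjoin ℂ ({Qp, Pp, Wp} : Set Rxy) := by
  have hQmem : Qp ∈ Algebra.adjoin ℂ ({Qp, Pp, Wp} : Set Rxy) :=
    Algebra.subset_adjoin (Set.mem_insert _ _)
  have hPmem : Pp ∈ Algebra.adjoin ℂ ({Qp, Pp, Wp} : Set Rxy) :=
    Algebra.subset_adjoin (Set.mem_insert_of_mem _ (Set.mem_insert _ _))
  have hWmem : Wp ∈ Algebra.adjoin ℂ ({Qp, Pp, Wp} : Set Rxy) :=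
    Algebra.subset_adjoin (Set.mem_insert_of_mem _ (Set.mem_insert_of_mem _ rfl))
  have hPA : Phi (Phi' A0) = A0 := Phi_Phi' A0
  have hd : dscale om (om ^ 2) (Phi' A0) = Phi' A0 := by
    have hcf := AlgHom.congr_fun sigma_Phi (Phi' A0)
    simp only [AlgHom.coe_comp, Function.comp_apply] at hcf
    have h1 : Phi (dscale om (om ^ 2) (Phi' A0)) = Phi (Phi' A0) := by
      rw [← hcf, hPA]; exact hA0
    calc dscale om (om ^ 2) (Phi' A0)
        = Phi' (Phi (dscale om (om ^ 2) (Phi' A0))) := (Phi'_Phi _).symm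
      _ = Phi' (Phi (Phi' A0)) := by rw [h1]
      _ = Phi' A0 := Phi'_Phi _
  have hsupp : ∀ m ∈ (Phi' A0).support, (m 0) % 3 = (m 1) % 3 := by
    intro m hm
    have h1 := dscale_support hd hm
    have h2 : om ^ (m 0 + 2 * m 1) = 1 := by
      rw [pow_add, pow_mul]
      exact h1
    have := om_pow_eq_one h2
    omega
  have hN := mem_adjoin3 hsupp
  have hrw : Psi A0 = (Psi.comp Phi) (Phi' A0) := by
    rw [AlgHom.coe_comp, Function.comp_apply, hPA]
  rw [hrw]
  have hmap : (Psi.comp Phi) (Phi' A0) ∈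
      (Algebra.adjoin ℂ ({X 0 * X 1, X 0 ^ 3, X 1 ^ 3} : Set Rxy)).map (Psi.comp Phi) :=
    Subalgebra.mem_map.mpr ⟨Phi' A0, hN, rfl⟩
  rw [AlgHom.map_adjoin] at hmap
  refine Algebra.adjoin_le ?_ hmap
  rintro p ⟨q, hq, rfl⟩
  rcases hq with rfl | rfl | rfl
  · rw [AlgHom.coe_comp, Function.comp_apply, Theta_UV]
    exact hPmem
  · rw [AlgHom.coe_comp, Function.comp_apply, Theta_U3]
    refine add_mem hQmem (mul_mem ?_ (pow_mem hWmem 2))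
    rw [show (C (3 * th) : Rxy) = algebraMap ℂ Rxy (3 * th) from rfl]
    exact Subalgebra.algebraMap_mem _ _
  · rw [AlgHom.coe_comp, Function.comp_apply, Theta_V3]
    refine sub_mem hQmem (mul_mem ?_ (pow_mem hWmem 2))
    rw [show (C (3 * th) : Rxy) = algebraMap ℂ Rxy (3 * th) from rfl]
    exact Subalgebra.algebraMap_mem _ _

/-! ### conversion lemmas for the two special actions -/

lemma mact_Mt_eq : mact Mt = dscale Complex.I (-Complex.I) := by
  unfold mact dscale
  congr 1
  funext i
  fin_cases i <;> simp [Mt, Fin.sum_univ_two]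

lemma mact_Jm_eq : mact Jm = aeval ![(X 1 : Rxy), -X 0] := by
  unfold mact
  congr 1
  funext i
  fin_cases i <;> simp [Jm, Fin.sum_univ_two]

end Stmt12Aux

end StmtAux

open Stmt12Aux in
open MvPolynomial in
/-- Let `ζ = exp(2π√-1/8)` and let `G ⊂ SL(2, ℂ)` be the binary tetrahedral group
generated by `diag(√-1, -√-1)` and `(1/√2)((ζ, ζ), (ζ³, ζ⁷))` (realized as the
multiplicative closure of these finite-order matrices), acting on `ℂ[x, y]` by linear
substitution. Then the invariant ring `ℂ[x, y]^G` is the `ℂ`-subalgebra generated by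
`x¹² - 33x⁸y⁴ - 33x⁴y⁸ + y¹²`, `x⁸ + 14x⁴y⁴ + y⁸` and `x⁵y - xy⁵`. -/
theorem stmt_12 (ζ : ℂ) (hζ : ζ = Complex.exp (2 * Real.pi * Complex.I / 8)) :
    {f : MvPolynomial (Fin 2) ℂ |
      ∀ g ∈ Submonoid.closure
          ({!![Complex.I, 0; 0, -Complex.I],
            !![(Real.sqrt 2 : ℂ)⁻¹ * ζ, (Real.sqrt 2 : ℂ)⁻¹ * ζ;
               (Real.sqrt 2 : ℂ)⁻¹ * ζ ^ 3, (Real.sqrt 2 : ℂ)⁻¹ * ζ ^ 7]} :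
            Set (Matrix (Fin 2) (Fin 2) ℂ)),
        MvPolynomial.aeval (fun i : Fin 2 => ∑ j : Fin 2, C (g i j) * X j) f = f} =
    ↑(Algebra.adjoin ℂ
      ({X 0 ^ 12 - 33 * X 0 ^ 8 * X 1 ^ 4 - 33 * X 0 ^ 4 * X 1 ^ 8 + X 1 ^ 12,
        X 0 ^ 8 + 14 * X 0 ^ 4 * X 1 ^ 4 + X 1 ^ 8,
        X 0 ^ 5 * X 1 - X 0 * X 1 ^ 5} : Set (MvPolynomial (Fin 2) ℂ))) := by
  have hsetQ : (X 0 ^ 12 - 33 * X 0 ^ 8 * X 1 ^ 4 - 33 * X 0 ^ 4 * X 1 ^ 8 + X 1 ^ 12 :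
      MvPolynomial (Fin 2) ℂ) = Qp := rfl
  have hsetP : (X 0 ^ 8 + 14 * X 0 ^ 4 * X 1 ^ 4 + X 1 ^ 8 :
      MvPolynomial (Fin 2) ℂ) = Pp := rfl
  have hsetW : (X 0 ^ 5 * X 1 - X 0 * X 1 ^ 5 : MvPolynomial (Fin 2) ℂ) = Wp := rfl
  rw [hsetQ, hsetP, hsetW]
  have hMtmem : Mt ∈ Submonoid.closure
      ({Mt, !![(Real.sqrt 2 : ℂ)⁻¹ * ζ, (Real.sqrt 2 : ℂ)⁻¹ * ζ;
               (Real.sqrt 2 : ℂ)⁻¹ * ζ ^ 3, (Real.sqrt 2 : ℂ)⁻¹ * ζ ^ 7]} :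
        Set (Matrix (Fin 2) (Fin 2) ℂ)) :=
    Submonoid.subset_closure (Set.mem_insert _ _)
  have hMzmem : !![(Real.sqrt 2 : ℂ)⁻¹ * ζ, (Real.sqrt 2 : ℂ)⁻¹ * ζ;
               (Real.sqrt 2 : ℂ)⁻¹ * ζ ^ 3, (Real.sqrt 2 : ℂ)⁻¹ * ζ ^ 7] ∈ Submonoid.closure
      ({Mt, !![(Real.sqrt 2 : ℂ)⁻¹ * ζ, (Real.sqrt 2 : ℂ)⁻¹ * ζ;
               (Real.sqrt 2 : ℂ)⁻¹ * ζ ^ 3, (Real.sqrt 2 : ℂ)⁻¹ * ζ ^ 7]} :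
        Set (Matrix (Fin 2) (Fin 2) ℂ)) :=
    Submonoid.subset_closure (Set.mem_insert_of_mem _ rfl)
  ext f
  simp only [Set.mem_setOf_eq, SetLike.mem_coe]
  constructor
  · intro h
    -- invariance under the three key elements
    have hMtf : mact Mt f = f := h Mt hMtmem
    have hMsf : mact Msn f = f := by
      have h1 := h _ hMzmem
      rw [show (MvPolynomial.aeval
          (fun i : Fin 2 => ∑ j : Fin 2,
            C ((!![(Real.sqrt 2 : ℂ)⁻¹ * ζ, (Real.sqrt 2 : ℂ)⁻¹ * ζ;
               (Real.sqrt 2 : ℂ)⁻¹ * ζ ^ 3, (Real.sqrt 2 : ℂ)⁻¹ * ζ ^ 7]) i j) * X j) f) =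
          mact Msn f from by rw [← hMsz hζ]; rfl] at h1
      exact h1
    have hJmem : Jm ∈ Submonoid.closure
        ({Mt, !![(Real.sqrt 2 : ℂ)⁻¹ * ζ, (Real.sqrt 2 : ℂ)⁻¹ * ζ;
               (Real.sqrt 2 : ℂ)⁻¹ * ζ ^ 3, (Real.sqrt 2 : ℂ)⁻¹ * ζ ^ 7]} :
          Set (Matrix (Fin 2) (Fin 2) ℂ)) := by
      rw [← hJword, ← hMsz hζ]
      exact mul_mem (mul_mem (mul_mem (mul_mem hMtmem hMzmem) hMzmem) hMtmem) hMzmem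
    have hJf : mact Jm f = f := h Jm hJmem
    -- decompose f = Psi A + Wp * Psi B
    obtain ⟨A, B, hAB⟩ := invariant_decomp
      (by rw [← mact_Mt_eq]; exact hMtf)
      (by rw [← mact_Jm_eq]; exact hJf)
    have hstep : ∀ A' B' : Rxy, mact Msn (Psi A' + Wp * Psi B') =
        Psi (sigma A') + Wp * Psi (sigma B') := by
      intro A' B'
      have hc1 := AlgHom.congr_fun mact_Msn_Psi A'
      have hc2 := AlgHom.congr_fun mact_Msn_Psi B'
      simp only [AlgHom.coe_comp, Function.comp_apply] at hc1 hc2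
      rw [map_add, map_mul, mact_s_W, hc1, hc2]
    have h1 : Psi (sigma A) + Wp * Psi (sigma B) = f := by
      rw [← hstep A B, ← hAB, hMsf]
    have h2 : Psi (sigma (sigma A)) + Wp * Psi (sigma (sigma B)) = f := by
      rw [← hstep (sigma A) (sigma B), h1, hMsf]
    set A0 : Rxy := C (1/3 : ℂ) * (A + sigma A + sigma (sigma A)) with hA0def
    set B0 : Rxy := C (1/3 : ℂ) * (B + sigma B + sigma (sigma B)) with hB0def
    have hf0 : f = Psi A0 + Wp * Psi B0 := by
      have hexp : Psi A0 + Wp * Psi B0 =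
          C (1/3 : ℂ) * ((Psi A + Wp * Psi B) + (Psi (sigma A) + Wp * Psi (sigma B)) +
            (Psi (sigma (sigma A)) + Wp * Psi (sigma (sigma B)))) := by
        rw [hA0def, hB0def, map_mul, map_mul, Psi_C, map_add, map_add, map_add, map_add]
        ring
      rw [hexp, ← hAB, h1, h2]
      rw [show (C (1/3 : ℂ) : Rxy) * (f + f + f) = (C (1/3 : ℂ) * C 3) * f by
        rw [map_ofNat]; ring, ← map_mul]
      norm_num
    have hA0 : sigma A0 = A0 := by
      rw [hA0def, map_mul, sigma_C, map_add, map_add, sigma_cube A]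
      ring
    have hB0 : sigma B0 = B0 := by
      rw [hB0def, map_mul, sigma_C, map_add, map_add, sigma_cube B]
      ring
    rw [hf0]
    exact add_mem (sigma_invariant_mem hA0)
      (mul_mem (Algebra.subset_adjoin (Set.mem_insert_of_mem _ (Set.mem_insert_of_mem _ rfl)))
        (sigma_invariant_mem hB0))
  · intro hf g hg
    have hgen : ∀ k ∈ Submonoid.closure
        ({Mt, !![(Real.sqrt 2 : ℂ)⁻¹ * ζ, (Real.sqrt 2 : ℂ)⁻¹ * ζ;
               (Real.sqrt 2 : ℂ)⁻¹ * ζ ^ 3, (Real.sqrt 2 : ℂ)⁻¹ * ζ ^ 7]} :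
          Set (Matrix (Fin 2) (Fin 2) ℂ)),
        mact k Qp = Qp ∧ mact k Pp = Pp ∧ mact k Wp = Wp := by
      intro k hk
      induction hk using Submonoid.closure_induction with
      | mem x hx =>
        rcases hx with rfl | hx
        · exact ⟨mact_t_Q, mact_t_P, mact_t_W⟩
        · rw [Set.mem_singleton_iff] at hx
          subst hx
          rw [hMsz hζ]
          exact ⟨mact_s_Q, mact_s_P, mact_s_W⟩
      | one =>
        rw [mact_one]
        exact ⟨rfl, rfl, rfl⟩
      | mul x y hx hy ihx ihy =>
        have hcQ := AlgHom.congr_fun (mact_mul x y) Qp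
        have hcP := AlgHom.congr_fun (mact_mul x y) Pp
        have hcW := AlgHom.congr_fun (mact_mul x y) Wp
        simp only [AlgHom.coe_comp, Function.comp_apply] at hcQ hcP hcW
        refine ⟨?_, ?_, ?_⟩
        · rw [← hcQ, ihx.1, ihy.1]
        · rw [← hcP, ihx.2.1, ihy.2.1]
        · rw [← hcW, ihx.2.2, ihy.2.2]
    obtain ⟨hQ, hP, hW⟩ := hgen g hg
    show mact g f = f
    have hf' : f ∈ AlgHom.equalizer (mact g) (AlgHom.id ℂ Rxy) := by
      apply Algebra.adjoin_le _ hf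
      rintro p hp
      rcases hp with rfl | hp
      · exact hQ
      rcases hp with rfl | hp
      · exact hP
      rw [Set.mem_singleton_iff] at hp
      subst hp
      exact hW
    exact hf'
end

section
/- Let ζ = exp(2π√−1/8) and let G ⊂ GL(4, ℂ) be the group of type (P) generated by the three 4 × 4 matrices A = blockdiag(diag(ζ, ζ⁻¹), diag(ζ⁻¹, ζ)), B = blockdiag((1/√2)·((ζ⁵, ζ⁵), (ζ⁷, ζ³)), (1/√2)·((ζ³, ζ⁷), (ζ⁵, ζ⁵))), and σ = ((0, I₂), (I₂, 0)). Then each of A, B, σ lies in Sp(ℂ⁴, ω), where ω(u, v) = u₁v₂ − u₂v₁ + u₃v₄ − u₄v₃, and the 2-dimensional subspace L = {v ∈ ℂ⁴ : v₁ = v₄ and v₂ = v₃} is a Lagrangian subspace of (ℂ⁴, ω) that is mapped onto itself by each of A, B, σ, hence by all of G. In particular G is an improper symplectic reflection group. -/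
/-- The standard symplectic form `ω(u, v) = u₁v₂ - u₂v₁ + u₃v₄ - u₄v₃` on `ℂ⁴`. -/
def omega4 (u v : Fin 4 → ℂ) : ℂ := u 0 * v 1 - u 1 * v 0 + u 2 * v 3 - u 3 * v 2

/-- The subspace `L = {v ∈ ℂ⁴ : v₁ = v₄ and v₂ = v₃}`. -/
noncomputable def Lsub : Submodule ℂ (Fin 4 → ℂ) where
  carrier := {v | v 0 = v 3 ∧ v 1 = v 2}
  add_mem' := fun ha hb =>
    ⟨by simp only [Pi.add_apply, ha.1, hb.1], by simp only [Pi.add_apply, ha.2, hb.2]⟩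
  zero_mem' := ⟨rfl, rfl⟩
  smul_mem' := fun c v hv =>
    ⟨by simp only [Pi.smul_apply, hv.1], by simp only [Pi.smul_apply, hv.2]⟩

lemma mem_Lsub {v : Fin 4 → ℂ} : v ∈ Lsub ↔ v 0 = v 3 ∧ v 1 = v 2 := Iff.rfl

/-- `L` is isomorphic to `ℂ²` via the first two coordinates. -/
noncomputable def LsubEquiv : Lsub ≃ₗ[ℂ] (Fin 2 → ℂ) where
  toFun v := ![v.1 0, v.1 1]
  map_add' u v := by funext i; fin_cases i <;> simp
  map_smul' c v := by funext i; fin_cases i <;> simp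
  invFun c := ⟨![c 0, c 1, c 1, c 0], ⟨rfl, rfl⟩⟩
  left_inv v := by
    ext i
    fin_cases i <;> simp [← v.2.1, ← v.2.2]
  right_inv c := by funext i; fin_cases i <;> simp

lemma finrank_Lsub : Module.finrank ℂ Lsub = 2 := by
  rw [LinearEquiv.finrank_eq LsubEquiv]
  simp

/-- Any matrix preserving `ω` acts injectively, since `ω` is nondegenerate. -/
lemma mulVec_inj {M : Matrix (Fin 4) (Fin 4) ℂ}
    (hM : ∀ u v, omega4 (M.mulVec u) (M.mulVec v) = omega4 u v) :
    Function.Injective M.mulVec := by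
  rw [← Matrix.coe_mulVecLin]
  rw [injective_iff_map_eq_zero]
  intro u hu
  have key : ∀ v, omega4 u v = 0 := by
    intro v
    have := hM u v
    rw [show M.mulVecLin u = M.mulVec u from rfl] at hu
    rw [hu] at this
    simp [omega4] at this
    exact this.symm
  funext i
  fin_cases i
  · simpa [omega4] using key ![0, 1, 0, 0]
  · have := key ![1, 0, 0, 0]; simp [omega4] at this; simpa using this
  · simpa [omega4] using key ![0, 0, 0, 1]
  · have := key ![0, 0, 1, 0]; simp [omega4] at this; simpa using this

/-- A symplectic matrix mapping `L` into `L` maps it onto `L`. -/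
lemma image_Lsub_eq {M : Matrix (Fin 4) (Fin 4) ℂ}
    (hM : ∀ u v, omega4 (M.mulVec u) (M.mulVec v) = omega4 u v)
    (hmap : ∀ v ∈ Lsub, M.mulVec v ∈ Lsub) :
    M.mulVec '' Lsub = Lsub := by
  have hmap' : ∀ v ∈ Lsub, M.mulVecLin v ∈ Lsub := hmap
  set f : Lsub →ₗ[ℂ] Lsub := (M.mulVecLin).restrict hmap' with hf
  have hinj : Function.Injective f := by
    intro x y hxy
    apply Subtype.ext
    apply mulVec_inj hM
    have := congrArg (Subtype.val) hxy
    simpa [hf, LinearMap.restrict_apply] using this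
  have hsurj : Function.Surjective f := (LinearMap.injective_iff_surjective).mp hinj
  apply Set.Subset.antisymm
  · rintro _ ⟨v, hv, rfl⟩
    exact hmap v hv
  · intro w hw
    obtain ⟨x, hx⟩ := hsurj ⟨w, hw⟩
    exact ⟨x.1, x.2, by simpa [hf, LinearMap.restrict_apply] using congrArg Subtype.val hx⟩

/-- For the group of type (P), generated by `A = blockdiag(diag(ζ, ζ⁻¹), diag(ζ⁻¹, ζ))`,
`B = blockdiag((1/√2)((ζ⁵,ζ⁵),(ζ⁷,ζ³)), (1/√2)((ζ³,ζ⁷),(ζ⁵,ζ⁵)))` and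
`σ = ((0,I₂),(I₂,0))` with `ζ = exp(2π√-1/8)`: each of `A`, `B`, `σ` is symplectic for
`ω`, and `L = {v : v₁ = v₄, v₂ = v₃}` is a Lagrangian subspace mapped onto itself by each
of `A`, `B`, `σ`, hence by the whole group they generate: the group of type (P) is an
improper symplectic reflection group. -/
theorem stmt_16 (ζ : ℂ) (hζ : ζ = Complex.exp (2 * Real.pi * Complex.I / 8))
    (A B S : Matrix (Fin 4) (Fin 4) ℂ)
    (hA : A = !![ζ, 0, 0, 0; 0, ζ⁻¹, 0, 0; 0, 0, ζ⁻¹, 0; 0, 0, 0, ζ])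
    (hB : B = !![(Real.sqrt 2 : ℂ)⁻¹ * ζ ^ 5, (Real.sqrt 2 : ℂ)⁻¹ * ζ ^ 5, 0, 0;
                 (Real.sqrt 2 : ℂ)⁻¹ * ζ ^ 7, (Real.sqrt 2 : ℂ)⁻¹ * ζ ^ 3, 0, 0;
                 0, 0, (Real.sqrt 2 : ℂ)⁻¹ * ζ ^ 3, (Real.sqrt 2 : ℂ)⁻¹ * ζ ^ 7;
                 0, 0, (Real.sqrt 2 : ℂ)⁻¹ * ζ ^ 5, (Real.sqrt 2 : ℂ)⁻¹ * ζ ^ 5])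
    (hS : S = !![0, 0, 1, 0; 0, 0, 0, 1; 1, 0, 0, 0; 0, 1, 0, 0]) :
    (∀ u v, omega4 (A.mulVec u) (A.mulVec v) = omega4 u v) ∧
    (∀ u v, omega4 (B.mulVec u) (B.mulVec v) = omega4 u v) ∧
    (∀ u v, omega4 (S.mulVec u) (S.mulVec v) = omega4 u v) ∧
    Module.finrank ℂ Lsub = 2 ∧
    (∀ u ∈ Lsub, ∀ v ∈ Lsub, omega4 u v = 0) ∧
    A.mulVec '' Lsub = Lsub ∧ B.mulVec '' Lsub = Lsub ∧ S.mulVec '' Lsub = Lsub ∧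
    (∀ g ∈ Submonoid.closure ({A, B, S} : Set (Matrix (Fin 4) (Fin 4) ℂ)),
      g.mulVec '' Lsub = Lsub) := by
  have h8 : ζ ^ 8 = 1 := by
    rw [hζ, ← Complex.exp_nat_mul]
    rw [show (8:ℕ) * (2 * Real.pi * Complex.I / 8) = 2 * Real.pi * Complex.I by push_cast; ring]
    simpa using Complex.exp_int_mul_two_pi_mul_I (1 : ℤ)
  have h4 : ζ ^ 4 = -1 := by
    rw [hζ, ← Complex.exp_nat_mul]
    rw [show (4:ℕ) * (2 * Real.pi * Complex.I / 8) = Real.pi * Complex.I by push_cast; ring]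
    exact Complex.exp_pi_mul_I
  have h0 : ζ ≠ 0 := hζ ▸ Complex.exp_ne_zero _
  have hs : ((Real.sqrt 2 : ℂ))⁻¹ * (Real.sqrt 2 : ℂ)⁻¹ = 1/2 := by
    rw [← mul_inv]
    rw [show ((Real.sqrt 2 : ℂ)) * (Real.sqrt 2 : ℂ) = ((Real.sqrt 2 * Real.sqrt 2 : ℝ) : ℂ) by
      push_cast; ring]
    rw [Real.mul_self_sqrt (by norm_num)]
    norm_num
  have hAsymp : ∀ u v, omega4 (A.mulVec u) (A.mulVec v) = omega4 u v := by
    intro u v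
    simp [omega4, hA, Matrix.mulVec, dotProduct, Fin.sum_univ_four,
      Matrix.vecHead, Matrix.vecTail]
    field_simp
  have hBsymp : ∀ u v, omega4 (B.mulVec u) (B.mulVec v) = omega4 u v := by
    intro u v
    simp [omega4, hB, Matrix.mulVec, dotProduct, Fin.sum_univ_four,
      Matrix.vecHead, Matrix.vecTail]
    have h12 : ζ ^ 12 = -1 := by rw [show (12:ℕ) = 8 + 4 from rfl, pow_add, h8, h4]; ring
    linear_combination
      ((Real.sqrt 2:ℂ)⁻¹ * (Real.sqrt 2:ℂ)⁻¹ * (u 0 * v 1 - u 1 * v 0) ) * h8 -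
      ((Real.sqrt 2:ℂ)⁻¹ * (Real.sqrt 2:ℂ)⁻¹ * (u 0 * v 1 - u 1 * v 0)) * h12 +
      ((Real.sqrt 2:ℂ)⁻¹ * (Real.sqrt 2:ℂ)⁻¹ * (u 2 * v 3 - u 3 * v 2)) * h8 -
      ((Real.sqrt 2:ℂ)⁻¹ * (Real.sqrt 2:ℂ)⁻¹ * (u 2 * v 3 - u 3 * v 2)) * h12 +
      (2 * (u 0 * v 1 - u 1 * v 0 + u 2 * v 3 - u 3 * v 2)) * hs
  have hSsymp : ∀ u v, omega4 (S.mulVec u) (S.mulVec v) = omega4 u v := by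
    intro u v
    simp [omega4, hS, Matrix.mulVec, dotProduct, Fin.sum_univ_four,
      Matrix.vecHead, Matrix.vecTail]
    ring
  have hAmap : ∀ v ∈ Lsub, A.mulVec v ∈ Lsub := by
    intro v hv
    obtain ⟨h1, h2⟩ := hv
    refine ⟨?_, ?_⟩ <;>
      simp [hA, Matrix.mulVec, dotProduct, Fin.sum_univ_four,
        Matrix.vecHead, Matrix.vecTail, h1, h2]
  have hBmap : ∀ v ∈ Lsub, B.mulVec v ∈ Lsub := by
    intro v hv
    obtain ⟨h1, h2⟩ := hv
    refine ⟨?_, ?_⟩ <;>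
      · simp [hB, Matrix.mulVec, dotProduct, Fin.sum_univ_four,
          Matrix.vecHead, Matrix.vecTail, h1, h2]
        ring
  have hSmap : ∀ v ∈ Lsub, S.mulVec v ∈ Lsub := by
    intro v hv
    obtain ⟨h1, h2⟩ := hv
    refine ⟨?_, ?_⟩ <;>
      simp [hS, Matrix.mulVec, dotProduct, Fin.sum_univ_four,
        Matrix.vecHead, Matrix.vecTail, h1, h2]
  have hAim := image_Lsub_eq hAsymp hAmap
  have hBim := image_Lsub_eq hBsymp hBmap
  have hSim := image_Lsub_eq hSsymp hSmap
  refine ⟨hAsymp, hBsymp, hSsymp, finrank_Lsub, ?_, hAim, hBim, hSim, ?_⟩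
  · rintro u ⟨hu1, hu2⟩ v ⟨hv1, hv2⟩
    simp only [omega4, hu1, hu2, hv1, hv2]
    ring
  · intro g hg
    induction hg using Submonoid.closure_induction with
    | mem x hx =>
      rcases hx with rfl | rfl | rfl
      · exact hAim
      · exact hBim
      · exact hSim
    | one => simp [Matrix.one_mulVec]
    | mul x y _ _ hx hy =>
      have : (x * y).mulVec = x.mulVec ∘ y.mulVec := by
        funext v
        simp [Matrix.mulVec_mulVec]
      rw [this, Set.image_comp, hy, hx]
end
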